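/- arXiv:1601.04216 — 4 statements merged into one kernel-verified Lean document; each statement's English description precedes it below -/
import Mathlib

section
/- For every ε > 0 there exists a twice continuously differentiable function Φ : ℝ² → ℝ with compact support such that 0 ≤ Φ(x) ≤ 1 for all x, Φ(x) = 1 for all x in the closed unit disk {|x| ≤ 1}, and ∫_{ℝ²} ‖∇Φ(x)‖² dm(x) < ε, where m is Lebesgue measure on ℝ² and ‖·‖ is the Euclidean norm of the gradient. -/
/-!
Take a smooth bump `φ` equal to `1` on the unit ball and vanishing outside the ball of radius `2`,
and average its rescalings `φ (4⁻ᵏ x)`, `k < n`: a discrete version of the truncated logarithm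
`log (R / ‖x‖) / log R`. The derivative of the `k`-th rescaling lives in the annulus
`4ᵏ ≤ ‖x‖ ≤ 2 · 4ᵏ`; these annuli are pairwise disjoint, so the Dirichlet energies of the
rescalings add up. In dimension two the Dirichlet energy is invariant under dilations, so each
rescaling has the energy `D` of `φ`, and the average has energy `n · D / n² = D / n → 0`.
-/

open MeasureTheory Module Metric

section DirichletEnergy

variable {E : Type*} [NormedAddCommGroup E] [NormedSpace ℝ E] [MeasurableSpace E]

noncomputable def dirichletEnergy (μ : Measure E) (f : E → ℝ) : ℝ :=
  ∫ x, ‖fderiv ℝ f x‖ ^ 2 ∂μ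

lemma dirichletEnergy_const_smul (μ : Measure E) (c : ℝ) (f : E → ℝ) :
    dirichletEnergy μ (c • f) = c ^ 2 * dirichletEnergy μ f := by
  simp only [dirichletEnergy, fderiv_const_smul_field, Pi.smul_apply, norm_smul, mul_pow,
    Real.norm_eq_abs, sq_abs, integral_const_mul]

lemma dirichletEnergy_comp_smul [BorelSpace E] [FiniteDimensional ℝ E] (μ : Measure E)
    [μ.IsAddHaarMeasure] (hE : finrank ℝ E = 2) (f : E → ℝ) {c : ℝ} (hc : c ≠ 0) :
    dirichletEnergy μ (fun x => f (c • x)) = dirichletEnergy μ f := by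
  simp only [dirichletEnergy, fderiv_comp_smul, norm_smul, mul_pow, Real.norm_eq_abs, sq_abs,
    integral_const_mul]
  rw [Measure.integral_comp_smul μ (fun y => ‖fderiv ℝ f y‖ ^ 2), hE, smul_eq_mul, ← mul_assoc,
    abs_of_pos (by positivity), mul_inv_cancel₀ (by positivity), one_mul]

lemma norm_sum_sq_of_pairwise_eq_zero {ι F : Type*} [SeminormedAddCommGroup F] (s : Finset ι)
    (v : ι → F) (hv : (s : Set ι).Pairwise fun i j => v i = 0 ∨ v j = 0) :
    ‖∑ i ∈ s, v i‖ ^ 2 = ∑ i ∈ s, ‖v i‖ ^ 2 := by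
  by_cases h : ∃ i ∈ s, v i ≠ 0
  · obtain ⟨i, hi, hvi⟩ := h
    have hzero : ∀ j ∈ s, j ≠ i → v j = 0 := fun j hj hji =>
      (hv hi hj hji.symm).resolve_left hvi
    rw [Finset.sum_eq_single_of_mem i hi hzero,
      Finset.sum_eq_single_of_mem i hi fun j hj hji => by simp [hzero j hj hji]]
  · push Not at h
    rw [Finset.sum_eq_zero h, Finset.sum_eq_zero fun i hi => by simp [h i hi], norm_zero]
    norm_num

lemma dirichletEnergy_sum_of_pairwise {ι : Type*} (μ : Measure E) (s : Finset ι) (f : ι → E → ℝ)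
    (hdiff : ∀ i ∈ s, Differentiable ℝ (f i))
    (hint : ∀ i ∈ s, Integrable (fun x => ‖fderiv ℝ (f i) x‖ ^ 2) μ)
    (hdisj : ∀ x, (s : Set ι).Pairwise fun i j => fderiv ℝ (f i) x = 0 ∨ fderiv ℝ (f j) x = 0) :
    dirichletEnergy μ (∑ i ∈ s, f i) = ∑ i ∈ s, dirichletEnergy μ (f i) := by
  have hpt : ∀ x, ‖fderiv ℝ (∑ i ∈ s, f i) x‖ ^ 2 = ∑ i ∈ s, ‖fderiv ℝ (f i) x‖ ^ 2 := fun x => by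
    rw [fderiv_sum fun i hi => (hdiff i hi).differentiableAt]
    exact norm_sum_sq_of_pairwise_eq_zero s _ (hdisj x)
  simp only [dirichletEnergy, hpt]
  exact integral_finsetSum s hint

lemma integrable_norm_fderiv_sq [OpensMeasurableSpace E] (μ : Measure E)
    [IsFiniteMeasureOnCompacts μ] {f : E → ℝ} (hf : ContDiff ℝ 1 f) (hsupp : HasCompactSupport f) :
    Integrable (fun x => ‖fderiv ℝ f x‖ ^ 2) μ := by
  have hcont : Continuous fun x => ‖fderiv ℝ f x‖ ^ 2 :=
    (hf.continuous_fderiv one_ne_zero).norm.pow 2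
  have hcs : HasCompactSupport fun x => ‖fderiv ℝ f x‖ ^ 2 :=
    hsupp.fderiv (𝕜 := ℝ) |>.comp_left (g := fun T => ‖T‖ ^ 2) (by simp)
  exact hcont.integrable_of_hasCompactSupport hcs

end DirichletEnergy

lemma norm_gradient_eq_norm_fderiv {F : Type*} [NormedAddCommGroup F] [InnerProductSpace ℝ F]
    [CompleteSpace F] (f : F → ℝ) (x : F) : ‖gradient f x‖ = ‖fderiv ℝ f x‖ := by
  rw [← toDual_gradient, LinearIsometryEquiv.norm_map]

section AveragedBump

variable {E : Type*} [NormedAddCommGroup E] [NormedSpace ℝ E] [HasContDiffBump E]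

noncomputable def unitBump : ContDiffBump (0 : E) := ⟨1, 2, one_pos, one_lt_two⟩

lemma one_le_norm_of_fderiv_unitBump_ne_zero {y : E}
    (h : fderiv ℝ ⇑(unitBump (E := E)) y ≠ 0) : 1 ≤ ‖y‖ := by
  by_contra! hy
  have : ⇑(unitBump (E := E)) =ᶠ[nhds y] fun _ => 1 :=
    Filter.eventually_of_mem (isOpen_ball.mem_nhds (mem_ball_zero_iff.2 hy)) fun z hz =>
      unitBump.one_of_mem_closedBall (ball_subset_closedBall hz)
  exact h (by rw [this.fderiv_eq, fderiv_fun_const]; rfl)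

lemma norm_le_two_of_fderiv_unitBump_ne_zero {y : E}
    (h : fderiv ℝ ⇑(unitBump (E := E)) y ≠ 0) : ‖y‖ ≤ 2 := by
  by_contra! hy
  refine h (fderiv_of_notMem_tsupport ℝ ?_)
  rw [unitBump.tsupport_eq, mem_closedBall_zero_iff]
  exact hy.not_ge

noncomputable def scaledBump (k : ℕ) : E → ℝ :=
  fun x => unitBump (E := E) (((4 : ℝ) ^ k)⁻¹ • x)

lemma scaledBump_nonneg (k : ℕ) (x : E) : 0 ≤ scaledBump k x := unitBump.nonneg

lemma scaledBump_le_one (k : ℕ) (x : E) : scaledBump k x ≤ 1 := unitBump.le_one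

lemma norm_mem_Icc_of_fderiv_scaledBump_ne_zero {k : ℕ} {x : E}
    (h : fderiv ℝ (scaledBump k) x ≠ 0) : ‖x‖ ∈ Set.Icc ((4 : ℝ) ^ k) (2 * 4 ^ k) := by
  have hne : fderiv ℝ ⇑(unitBump (E := E)) (((4 : ℝ) ^ k)⁻¹ • x) ≠ 0 := fun h0 =>
    h (by unfold scaledBump; rw [fderiv_comp_smul, h0, smul_zero])
  have h1 := one_le_norm_of_fderiv_unitBump_ne_zero hne
  have h2 := norm_le_two_of_fderiv_unitBump_ne_zero hne
  rw [norm_smul, Real.norm_of_nonneg (by positivity), inv_mul_eq_div] at h1 h2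
  have h4 : (0 : ℝ) < 4 ^ k := by positivity
  exact ⟨(one_le_div h4).1 h1, (div_le_iff₀ h4).1 h2⟩

lemma fderiv_scaledBump_pairwise (x : E) (s : Finset ℕ) :
    (s : Set ℕ).Pairwise fun j k =>
      fderiv ℝ (scaledBump j) x = 0 ∨ fderiv ℝ (scaledBump k) x = 0 := by
  intro j _ k _ hjk
  by_contra! h
  obtain ⟨hj₁, hj₂⟩ := norm_mem_Icc_of_fderiv_scaledBump_ne_zero h.1
  obtain ⟨hk₁, hk₂⟩ := norm_mem_Icc_of_fderiv_scaledBump_ne_zero h.2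
  have hgap : ∀ a b : ℕ, a < b → 2 * (4 : ℝ) ^ a < 4 ^ b := fun a b hab => by
    calc 2 * (4 : ℝ) ^ a < 4 * 4 ^ a := by gcongr; norm_num
      _ = 4 ^ (a + 1) := by ring
      _ ≤ 4 ^ b := pow_le_pow_right₀ (by norm_num) hab
  rcases hjk.lt_or_gt with hlt | hlt <;> linarith [hgap _ _ hlt]

noncomputable def averagedBump (n : ℕ) : E → ℝ :=
  (n : ℝ)⁻¹ • ∑ k ∈ Finset.range n, scaledBump k

lemma averagedBump_apply (n : ℕ) (x : E) :
    averagedBump n x = (n : ℝ)⁻¹ * ∑ k ∈ Finset.range n, scaledBump k x := by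
  simp [averagedBump, Finset.sum_apply]

lemma contDiff_scaledBump (k : ℕ) {m : ℕ∞} : ContDiff ℝ m (scaledBump (E := E) k) :=
  unitBump.contDiff.comp (contDiff_const_smul _)

lemma contDiff_averagedBump (n : ℕ) {m : ℕ∞} : ContDiff ℝ m (averagedBump (E := E) n) := by
  rw [averagedBump, Finset.sum_fn]
  exact (ContDiff.sum fun k _ => contDiff_scaledBump (E := E) k).const_smul (n : ℝ)⁻¹

lemma hasCompactSupport_scaledBump [FiniteDimensional ℝ E] (k : ℕ) :
    HasCompactSupport (scaledBump (E := E) k) :=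
  unitBump.hasCompactSupport.comp_smul (by positivity)

lemma hasCompactSupport_averagedBump [FiniteDimensional ℝ E] (n : ℕ) :
    HasCompactSupport (averagedBump (E := E) n) :=
  (HasCompactSupport.finset_sum fun k _ => hasCompactSupport_scaledBump k).mono
    (Function.support_const_smul_subset _ _)

lemma averagedBump_mem_Icc (n : ℕ) (x : E) : averagedBump n x ∈ Set.Icc 0 1 := by
  rw [averagedBump_apply]
  have hsum_le : ∑ k ∈ Finset.range n, scaledBump k x ≤ n := by
    simpa using Finset.sum_le_card_nsmul (Finset.range n) _ 1 fun k _ => scaledBump_le_one k x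
  refine ⟨mul_nonneg (by positivity) (Finset.sum_nonneg fun k _ => scaledBump_nonneg k x), ?_⟩
  rcases eq_or_ne n 0 with rfl | hn
  · simp
  · rw [inv_mul_le_iff₀ (by positivity), mul_one]
    exact hsum_le

lemma averagedBump_eq_one {n : ℕ} (hn : n ≠ 0) {x : E} (hx : ‖x‖ ≤ 1) : averagedBump n x = 1 := by
  have hscaled : ∀ k, scaledBump k x = 1 := fun k => by
    refine unitBump.one_of_mem_closedBall (mem_closedBall_zero_iff.2 ?_)
    rw [norm_smul, Real.norm_of_nonneg (by positivity)]
    exact mul_le_one₀ (inv_le_one_of_one_le₀ (one_le_pow₀ (by norm_num))) (norm_nonneg x) hx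
  simp [averagedBump_apply, hscaled, hn]

lemma dirichletEnergy_averagedBump [MeasurableSpace E] [BorelSpace E] [FiniteDimensional ℝ E]
    (μ : Measure E) [μ.IsAddHaarMeasure] (hE : finrank ℝ E = 2) (n : ℕ) :
    dirichletEnergy μ (averagedBump n) = dirichletEnergy μ ⇑(unitBump (E := E)) / n := by
  have hscaled : ∀ k, dirichletEnergy μ (scaledBump k) = dirichletEnergy μ ⇑(unitBump (E := E)) :=
    fun k => dirichletEnergy_comp_smul μ hE _ (by positivity)
  rw [averagedBump, dirichletEnergy_const_smul,
    dirichletEnergy_sum_of_pairwise μ _ _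
      (fun k _ => (contDiff_scaledBump k).differentiable one_ne_zero)
      (fun k _ => integrable_norm_fderiv_sq μ (contDiff_scaledBump k)
        (hasCompactSupport_scaledBump k))
      (fun x => fderiv_scaledBump_pairwise x _)]
  simp only [hscaled, Finset.sum_const, Finset.card_range, nsmul_eq_mul]
  rcases eq_or_ne n 0 with rfl | hn
  · simp
  · field_simp

end AveragedBump

/-- For every `ε > 0` there is a `C²` compactly supported plateau function `Φ : ℝ² → ℝ`
with `0 ≤ Φ ≤ 1`, `Φ = 1` on the closed unit disk, and Dirichlet energy
`∫ ‖∇Φ‖² < ε`. -/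
theorem stmt_2 (ε : ℝ) (hε : 0 < ε) :
    ∃ Φ : EuclideanSpace ℝ (Fin 2) → ℝ,
      ContDiff ℝ 2 Φ ∧ HasCompactSupport Φ ∧
      (∀ x, 0 ≤ Φ x ∧ Φ x ≤ 1) ∧
      (∀ x, ‖x‖ ≤ 1 → Φ x = 1) ∧
      ∫ x, ‖gradient Φ x‖ ^ 2 < ε := by
  set D := dirichletEnergy volume ⇑(unitBump (E := EuclideanSpace ℝ (Fin 2)))
  obtain ⟨n, hn⟩ := exists_nat_gt (D / ε)
  have hD : 0 ≤ D := integral_nonneg fun x => by positivity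
  have hn0 : (0 : ℝ) < n := (div_nonneg hD hε.le).trans_lt hn
  refine ⟨averagedBump n, contDiff_averagedBump n, hasCompactSupport_averagedBump n,
    averagedBump_mem_Icc n, fun x hx => averagedBump_eq_one (by exact_mod_cast hn0.ne') hx, ?_⟩
  simp_rw [norm_gradient_eq_norm_fderiv]
  change dirichletEnergy volume _ < ε
  rw [dirichletEnergy_averagedBump volume finrank_euclideanSpace_fin, div_lt_iff₀ hn0]
  rwa [div_lt_iff₀ hε, mul_comm] at hn
end

section
/- Let ε > 0, C > 0, and δ > 0. There exists a twice continuously differentiable function φ : ℝ² → ℝ with compact support such that 0 ≤ φ ≤ 1, φ(x) = 1 for all |x| ≤ 1, and ∫_{ℝ²} ∫_{ℝ²} |φ(x) − φ(y)|² C (1 + |x − y|)^{−(4+ε)} dm(x) dm(y) < δ. -/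
/-!
Take the logarithmic cutoff `φ_R(x) = s(2 - log ‖x‖ / log R)`, `s` a smooth step: it is `1`
on the disk of radius `R`, `0` outside radius `R²`, and, with `m = max ‖x‖ R`,
`|φ_R(x) - φ_R(y)| ≲ ‖x - y‖ / (m log R)` when `‖x - y‖ ≤ m / 2`. For `‖x - y‖ > m / 2` we
use instead `|φ_R(x) - φ_R(y)| ≤ 1 ≤ (2‖x - y‖ / m) ^ p` with `p = 2 + ε / 2`. The kernel
decay `4 + ε` makes `‖z‖² k(z)` and `‖z‖ᵖ k(z)` integrable, so by translation invariance the
double integral is at most `(∫_{m ≤ 2R²} m⁻² dx) / log² R + ∫ m⁻ᵖ dx` up to constants. In the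
plane the first integral is only `O(log R)` and the second is `O(R^(2 - p))`, so the energy
tends to `0` as `R → ∞`.
-/

open MeasureTheory Set Filter Topology Metric Module Real

theorem Real.smoothTransition.exists_lipschitzWith : ∃ K, LipschitzWith K smoothTransition := by
  obtain ⟨K, hK⟩ := (smoothTransition.contDiff (n := 1)).locallyLipschitz.locallyLipschitzOn
    |>.exists_lipschitzOnWith_of_compact (isCompact_Icc (a := (0 : ℝ)) (b := 1))
  have hext : IccExtend zero_le_one (smoothTransition ∘ (↑)) = smoothTransition :=
    IccExtend_eq_self _ _ (fun x hx => by simp [smoothTransition.zero_of_nonpos hx.le])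
      fun x hx => by simp [smoothTransition.one_of_one_le hx.le]
  refine ⟨K, ?_⟩
  rw [← hext, IccExtend, ← mul_one K]
  exact hK.to_restrict.comp (LipschitzWith.projIcc zero_le_one)

theorem Real.abs_log_sub_log_le {a b : ℝ} (ha : 0 < a) (hb : 0 < b) :
    |log a - log b| ≤ |a - b| / min a b := by
  wlog hab : b ≤ a generalizing a b
  · rw [abs_sub_comm, abs_sub_comm a b, min_comm]
    exact this hb ha (le_of_not_ge hab)
  rw [abs_of_nonneg (sub_nonneg.2 (log_le_log hb hab)), abs_of_nonneg (sub_nonneg.2 hab),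
    min_eq_right hab, ← log_div ha.ne' hb.ne', sub_div, div_self hb.ne']
  exact log_le_sub_one_of_pos (div_pos ha hb)

section LogCutoff

variable {E : Type*} [NormedAddCommGroup E] {R : ℝ}

noncomputable def logCutoff (R : ℝ) (x : E) : ℝ := smoothTransition (2 - log ‖x‖ / log R)

theorem logCutoff_nonneg (R : ℝ) (x : E) : 0 ≤ logCutoff R x := smoothTransition.nonneg _

theorem logCutoff_le_one (R : ℝ) (x : E) : logCutoff R x ≤ 1 := smoothTransition.le_one _

theorem logCutoff_eq_one (hR : 1 < R) {x : E} (hx : ‖x‖ ≤ R) : logCutoff R x = 1 := by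
  apply smoothTransition.one_of_one_le
  have hlog : log ‖x‖ ≤ log R := by
    rcases le_or_gt ‖x‖ 1 with h1 | h1
    · exact (log_nonpos (norm_nonneg _) h1).trans (log_pos hR).le
    · exact log_le_log (by linarith) hx
  linarith [(div_le_one (log_pos hR)).2 hlog]

theorem logCutoff_eq_zero (hR : 1 < R) {x : E} (hx : R ^ 2 ≤ ‖x‖) : logCutoff R x = 0 := by
  apply smoothTransition.zero_of_nonpos
  have hlog : 2 * log R ≤ log ‖x‖ := by
    simpa [log_pow] using log_le_log (by positivity) hx
  linarith [(le_div_iff₀ (log_pos hR)).2 hlog]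

theorem contDiff_logCutoff [InnerProductSpace ℝ E] (hR : 1 < R) {n : ℕ∞} :
    ContDiff ℝ n (logCutoff R : E → ℝ) := by
  refine contDiff_iff_contDiffAt.2 fun x => ?_
  rcases eq_or_ne x 0 with rfl | hx
  · have hone : logCutoff R =ᶠ[𝓝 (0 : E)] fun _ => 1 := by
      filter_upwards [ball_mem_nhds (0 : E) (zero_lt_one.trans hR)] with y hy
      exact logCutoff_eq_one hR (mem_ball_zero_iff.1 hy).le
    exact contDiffAt_const.congr_of_eventuallyEq hone
  · have hlog : ContDiffAt ℝ n (fun y : E => log ‖y‖) x :=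
      (contDiffAt_log.2 (norm_ne_zero_iff.2 hx)).comp x (contDiffAt_norm ℝ hx)
    exact smoothTransition.contDiffAt.comp x (contDiffAt_const.sub (hlog.div_const _))

theorem hasCompactSupport_logCutoff [ProperSpace E] (hR : 1 < R) :
    HasCompactSupport (logCutoff R : E → ℝ) :=
  HasCompactSupport.intro (isCompact_closedBall 0 (R ^ 2)) fun x hx =>
    logCutoff_eq_zero hR (by simpa using (not_le.1 (mt mem_closedBall_zero_iff.2 hx)).le)

theorem logCutoff_eq_smoothTransition_max (hR : 1 < R) (x : E) :
    logCutoff R x = smoothTransition (2 - log (max ‖x‖ R) / log R) := by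
  rcases le_total ‖x‖ R with h | h
  · rw [max_eq_right h, logCutoff_eq_one hR h, div_self (log_pos hR).ne']
    norm_num
  · rw [max_eq_left h, logCutoff]

theorem abs_logCutoff_sub_le (hR : 1 < R) {K : NNReal} (hK : LipschitzWith K smoothTransition)
    (x y : E) :
    |logCutoff R x - logCutoff R y| ≤
      K / log R * (‖x - y‖ / max R (min ‖x‖ ‖y‖)) := by
  have hR0 : 0 < R := zero_lt_one.trans hR
  set a := log (max ‖x‖ R)
  set b := log (max ‖y‖ R)
  have hab : |a - b| ≤ ‖x - y‖ / max R (min ‖x‖ ‖y‖) :=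
    calc |a - b| ≤ |max ‖x‖ R - max ‖y‖ R| / min (max ‖x‖ R) (max ‖y‖ R) :=
          abs_log_sub_log_le (lt_max_of_lt_right hR0) (lt_max_of_lt_right hR0)
      _ ≤ ‖x - y‖ / max R (min ‖x‖ ‖y‖) := by
          rw [← max_min_distrib_right, max_comm (min _ _)]
          gcongr
          exact (abs_max_sub_max_le_abs _ _ _).trans (abs_norm_sub_norm_le x y)
  have hL := log_pos hR
  rw [logCutoff_eq_smoothTransition_max hR, logCutoff_eq_smoothTransition_max hR]
  calc _ ≤ K * |(2 - a / log R) - (2 - b / log R)| := by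
        simpa only [Real.dist_eq] using hK.dist_le_mul (2 - a / log R) (2 - b / log R)
    _ = K / log R * |a - b| := by
        rw [show (2 - a / log R) - (2 - b / log R) = -((a - b) / log R) by ring,
          abs_neg, abs_div, abs_of_pos hL]
        ring
    _ ≤ _ := by gcongr

theorem half_max_norm_le_max_min_norm {x y : E} (h : ‖x - y‖ ≤ max ‖x‖ R / 2) :
    max ‖x‖ R / 2 ≤ max R (min ‖x‖ ‖y‖) := by
  have hy : ‖x‖ - ‖x - y‖ ≤ ‖y‖ := by
    linarith [norm_sub_norm_le x y, norm_sub_rev x y]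
  rcases le_total ‖x‖ R with hxR | hxR
  · rw [max_eq_right hxR] at h ⊢
    linarith [le_max_left R (min ‖x‖ ‖y‖), norm_nonneg (x - y)]
  · rw [max_eq_left hxR] at h ⊢
    exact le_max_of_le_right (le_min (by linarith [norm_nonneg x]) (by linarith))

theorem logCutoff_eq_of_two_mul_sq_lt_max (hR : 1 < R) {x y : E} (hx : 2 * R ^ 2 < max ‖x‖ R)
    (h : ‖x - y‖ ≤ max ‖x‖ R / 2) : logCutoff R x = logCutoff R y := by
  have hxm : max ‖x‖ R = ‖x‖ := max_eq_left <| by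
    by_contra hxR
    rw [max_eq_right (not_le.1 hxR).le] at hx
    nlinarith
  rw [hxm] at hx h
  rw [logCutoff_eq_zero hR (by nlinarith),
    logCutoff_eq_zero hR (by nlinarith [norm_sub_norm_le x y, norm_sub_rev x y])]

noncomputable def truncInvSq (c t : ℝ) : ℝ := if t ≤ c then (t ^ 2)⁻¹ else 0

theorem sq_abs_logCutoff_sub_le (hR : 1 < R) {K : NNReal}
    (hK : LipschitzWith K smoothTransition) {p : ℝ} (hp : 0 ≤ p) (x y : E) :
    |logCutoff R x - logCutoff R y| ^ 2 ≤
      truncInvSq (2 * R ^ 2) (max ‖x‖ R) * (2 * K / log R) ^ 2 * ‖x - y‖ ^ (2 : ℝ) +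
        max ‖x‖ R ^ (-p) * 2 ^ p * ‖x - y‖ ^ p := by
  set m := max ‖x‖ R
  set s := ‖x - y‖
  have hm : 0 < m := lt_max_of_lt_right (zero_lt_one.trans hR)
  have hL := log_pos hR
  have hnear_nonneg : 0 ≤ truncInvSq (2 * R ^ 2) m * (2 * K / log R) ^ 2 * s ^ (2 : ℝ) := by
    unfold truncInvSq
    split_ifs <;> positivity
  rcases le_or_gt s (m / 2) with hnear | hfar
  · refine le_add_of_le_of_nonneg ?_ (by positivity)
    unfold truncInvSq
    split_ifs with hm2
    · have hdiff : |logCutoff R x - logCutoff R y| ≤ 2 * K / log R * s / m :=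
        calc _ ≤ K / log R * (s / max R (min ‖x‖ ‖y‖)) := abs_logCutoff_sub_le hR hK x y
          _ ≤ K / log R * (s / (m / 2)) := by
              gcongr
              exact half_max_norm_le_max_min_norm hnear
          _ = 2 * K / log R * s / m := by field_simp
      calc _ ≤ (2 * K / log R * s / m) ^ 2 := pow_le_pow_left₀ (abs_nonneg _) hdiff 2
        _ = _ := by rw [rpow_two]; field_simp
    · simp [logCutoff_eq_of_two_mul_sq_lt_max hR (not_le.1 hm2) hnear]
  · refine le_add_of_nonneg_of_le hnear_nonneg ?_
    calc |logCutoff R x - logCutoff R y| ^ 2 ≤ 1 := by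
          refine pow_le_one₀ (abs_nonneg _) (abs_sub_le_of_nonneg_of_le ?_ ?_ ?_ ?_) <;>
            simp [logCutoff_nonneg, logCutoff_le_one]
      _ ≤ (2 * s / m) ^ p := one_le_rpow ((le_div_iff₀ hm).2 (by linarith)) hp
      _ = m ^ (-p) * 2 ^ p * s ^ p := by
        rw [div_rpow (by positivity) hm.le, mul_rpow zero_le_two (norm_nonneg _), rpow_neg hm.le]
        ring

end LogCutoff

theorem integral_integral_le_of_le_mul_sub {G : Type*} [MeasurableSpace G] [AddGroup G]
    [MeasurableAdd G] [MeasurableNeg G] {μ : Measure G} [μ.IsNegInvariant] [μ.IsAddLeftInvariant]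
    {F : G → G → ℝ} {a b h g : G → ℝ} (hF : ∀ x y, 0 ≤ F x y)
    (hFle : ∀ x y, F x y ≤ a x * h (x - y) + b x * g (x - y))
    (ha : Integrable a μ) (hb : Integrable b μ) (hh : Integrable h μ) (hg : Integrable g μ) :
    ∫ x, ∫ y, F x y ∂μ ∂μ ≤
      (∫ x, a x ∂μ) * (∫ z, h z ∂μ) + (∫ x, b x ∂μ) * ∫ z, g z ∂μ := by
  have hinner (x : G) :
      ∫ y, F x y ∂μ ≤ a x * (∫ z, h z ∂μ) + b x * ∫ z, g z ∂μ := by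
    have hh' := (hh.comp_sub_left x).const_mul (a x)
    have hg' := (hg.comp_sub_left x).const_mul (b x)
    calc ∫ y, F x y ∂μ ≤ ∫ y, (a x * h (x - y) + b x * g (x - y)) ∂μ :=
          integral_mono_of_nonneg (ae_of_all _ (hF x)) (hh'.add hg') (ae_of_all _ (hFle x))
      _ = _ := by
          rw [integral_add hh' hg', integral_const_mul, integral_const_mul,
            integral_sub_left_eq_self h μ x, integral_sub_left_eq_self g μ x]
  have ha' := ha.mul_const (∫ z, h z ∂μ)
  have hb' := hb.mul_const (∫ z, g z ∂μ)
  calc ∫ x, ∫ y, F x y ∂μ ∂μ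
      ≤ ∫ x, (a x * (∫ z, h z ∂μ) + b x * ∫ z, g z ∂μ) ∂μ :=
        integral_mono_of_nonneg (ae_of_all _ fun x => integral_nonneg (hF x)) (ha'.add hb')
          (ae_of_all _ hinner)
    _ = _ := by rw [integral_add ha' hb', integral_mul_const, integral_mul_const]

theorem tendsto_add_log_div_log_sq_atTop (c : ℝ) :
    Tendsto (fun R => (c + log R) / log R ^ 2) atTop (𝓝 0) := by
  have h : Tendsto (fun L : ℝ => c * L⁻¹ ^ 2 + L⁻¹) atTop (𝓝 0) := by
    simpa using ((tendsto_inv_atTop_zero.pow 2).const_mul c).add tendsto_inv_atTop_zero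
  refine (h.comp tendsto_log_atTop).congr' ?_
  filter_upwards [eventually_gt_atTop 1] with R hR
  have := (log_pos hR).ne'
  simp only [Function.comp_apply]
  field_simp

section Plane

variable {E : Type*} [NormedAddCommGroup E] [NormedSpace ℝ E] [FiniteDimensional ℝ E]
  [MeasurableSpace E] [BorelSpace E] (μ : Measure E) [μ.IsAddHaarMeasure]

theorem integrable_norm_rpow_mul_one_add_norm_rpow {s r : ℝ} (hs : 0 ≤ s)
    (hr : finrank ℝ E < r - s) :
    Integrable (fun z : E => ‖z‖ ^ s * (1 + ‖z‖) ^ (-r)) μ := by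
  refine (integrable_one_add_norm (μ := μ) hr).mono' (by fun_prop) (ae_of_all _ fun z => ?_)
  have h1 : 0 < 1 + ‖z‖ := by positivity
  rw [norm_of_nonneg (by positivity), neg_sub, rpow_sub h1, div_eq_mul_inv, ← rpow_neg h1.le]
  gcongr
  linarith [norm_nonneg z]

variable (hE : finrank ℝ E = 2)
include hE

theorem integral_comp_max_norm_of_finrank_eq_two {f : ℝ → ℝ} {R : ℝ} (hR : 0 ≤ R)
    (hf : IntegrableOn (fun t => t * f t) (Ioi R)) :
    Integrable (fun x => f (max ‖x‖ R)) μ ∧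
      ∫ x, f (max ‖x‖ R) ∂μ =
        2 * μ.real (ball 0 1) * (R ^ 2 / 2 * f R + ∫ t in Ioi R, t * f t) := by
  have : Nontrivial E := Module.finrank_pos_iff (R := ℝ).1 (by omega)
  have hsplit : Ioi (0 : ℝ) = Ioc 0 R ∪ Ioi R := (Ioc_union_Ioi_eq_Ioi hR).symm
  have hnear : EqOn (fun t => t * f (max t R)) (fun t => t * f R) (Ioc 0 R) :=
    fun t ht => by simp only [max_eq_right ht.2]
  have hfar : EqOn (fun t => t * f (max t R)) (fun t => t * f t) (Ioi R) :=
    fun t ht => by simp only [max_eq_left (le_of_lt (mem_Ioi.1 ht))]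
  have h1 : IntegrableOn (fun t => t * f (max t R)) (Ioc 0 R) :=
    (continuous_id.mul continuous_const).integrableOn_Ioc.congr_fun hnear.symm measurableSet_Ioc
  have h2 : IntegrableOn (fun t => t * f (max t R)) (Ioi R) :=
    hf.congr_fun hfar.symm measurableSet_Ioi
  constructor
  · rw [integrable_fun_norm_addHaar μ (f := fun t => f (max t R)), hE, hsplit]
    simpa using h1.union h2
  · rw [integral_fun_norm_addHaar μ (f := fun t => f (max t R)), hE]
    simp only [smul_eq_mul, pow_one, Nat.add_one_sub_one]
    rw [hsplit, setIntegral_union Ioc_disjoint_Ioi_same measurableSet_Ioi h1 h2,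
      setIntegral_congr_fun measurableSet_Ioc hnear, setIntegral_congr_fun measurableSet_Ioi hfar,
      integral_mul_const, ← intervalIntegral.integral_of_le hR, integral_id]
    ring

theorem integral_truncInvSq_max_norm {R c : ℝ} (hR : 0 < R) (hRc : R ≤ c) :
    Integrable (fun x : E => truncInvSq c (max ‖x‖ R)) μ ∧
      ∫ x, truncInvSq c (max ‖x‖ R) ∂μ =
        2 * μ.real (ball 0 1) * (1 / 2 + log (c / R)) := by
  have hfar : EqOn (fun t => t * truncInvSq c t) ((Ioc R c).indicator fun t => t⁻¹) (Ioi R) := by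
    intro t (ht : R < t)
    by_cases h : t ≤ c
    · simp only [truncInvSq, h, if_true, indicator_of_mem (show t ∈ Ioc R c from ⟨ht, h⟩)]
      field_simp
    · simp [truncInvSq, h]
  have hinv : IntegrableOn (fun t : ℝ => t⁻¹) (Ioc R c) :=
    (intervalIntegrable_iff_integrableOn_Ioc_of_le hRc).1 <|
      intervalIntegral.intervalIntegrable_inv
        (fun t ht => (hR.trans_le (by rw [uIcc_of_le hRc] at ht; exact ht.1)).ne')
        continuousOn_id
  have hint := ((integrable_indicator_iff measurableSet_Ioc).2 hinv).integrableOn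
    |>.congr_fun hfar.symm measurableSet_Ioi
  obtain ⟨hw, hval⟩ := integral_comp_max_norm_of_finrank_eq_two μ hE hR.le hint
  refine ⟨hw, hval.trans ?_⟩
  rw [setIntegral_congr_fun measurableSet_Ioi hfar, setIntegral_indicator measurableSet_Ioc,
    inter_eq_right.2 Ioc_subset_Ioi_self, ← intervalIntegral.integral_of_le hRc,
    integral_inv_of_pos hR (hR.trans_le hRc), truncInvSq, if_pos hRc]
  field_simp

theorem integral_max_norm_rpow_neg {R p : ℝ} (hR : 0 < R) (hp : 2 < p) :
    Integrable (fun x : E => max ‖x‖ R ^ (-p)) μ ∧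
      ∫ x, max ‖x‖ R ^ (-p) ∂μ =
        2 * μ.real (ball 0 1) * (1 / 2 + 1 / (p - 2)) * R ^ (2 - p) := by
  have hfar : EqOn (fun t : ℝ => t * t ^ (-p)) (fun t => t ^ (1 - p)) (Ioi R) := by
    intro t (ht : R < t)
    simp only
    rw [rpow_sub (hR.trans ht), rpow_one, rpow_neg (hR.trans ht).le, div_eq_mul_inv]
  have hint := (integrableOn_Ioi_rpow_of_lt (by linarith : 1 - p < -1) hR).congr_fun hfar.symm
    measurableSet_Ioi
  obtain ⟨hw, hval⟩ := integral_comp_max_norm_of_finrank_eq_two μ hE hR.le hint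
  refine ⟨hw, hval.trans ?_⟩
  rw [setIntegral_congr_fun measurableSet_Ioi hfar,
    integral_Ioi_rpow_of_lt (by linarith : 1 - p < -1) hR, show 1 - p + 1 = 2 - p by ring,
    show R ^ (2 - p) = R ^ 2 * R ^ (-p) by rw [sub_eq_add_neg, rpow_add hR, rpow_two]]
  have : p - 2 ≠ 0 := by linarith
  have : 2 - p ≠ 0 := by linarith
  field_simp
  ring

theorem exists_integral_integral_logCutoff_le {ε C : ℝ} (hε : 0 < ε) (hC : 0 ≤ C) :
    ∃ A B : ℝ, ∀ R, 1 < R →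
      ∫ x, ∫ y, |logCutoff R x - logCutoff R y| ^ 2 *
          (C * (1 + ‖x - y‖) ^ (-(4 + ε))) ∂μ ∂μ ≤
        A * ((1 / 2 + log (2 * R)) / log R ^ 2) + B * R ^ (-(ε / 2)) := by
  obtain ⟨K, hK⟩ := smoothTransition.exists_lipschitzWith
  set p := 2 + ε / 2 with hp
  set N₁ := ∫ z, C * (‖z‖ ^ (2 : ℝ) * (1 + ‖z‖) ^ (-(4 + ε))) ∂μ
  set N₂ := ∫ z, C * (‖z‖ ^ p * (1 + ‖z‖) ^ (-(4 + ε))) ∂μ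
  have hh₁ :
      Integrable (fun z : E => C * (‖z‖ ^ (2 : ℝ) * (1 + ‖z‖) ^ (-(4 + ε)))) μ :=
    (integrable_norm_rpow_mul_one_add_norm_rpow μ zero_le_two
      (by rw [hE]; push_cast; linarith)).const_mul C
  have hh₂ : Integrable (fun z : E => C * (‖z‖ ^ p * (1 + ‖z‖) ^ (-(4 + ε)))) μ :=
    (integrable_norm_rpow_mul_one_add_norm_rpow μ (by positivity)
      (by rw [hE]; push_cast; linarith)).const_mul C
  refine ⟨2 * μ.real (ball 0 1) * (2 * K) ^ 2 * N₁,
    2 * μ.real (ball 0 1) * (1 / 2 + 1 / (p - 2)) * 2 ^ p * N₂, fun R hR => ?_⟩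
  have hR0 : 0 < R := zero_lt_one.trans hR
  have hL := (log_pos hR).ne'
  obtain ⟨hw₁, hw₁_eq⟩ :=
    integral_truncInvSq_max_norm μ hE hR0 (by nlinarith : R ≤ 2 * R ^ 2)
  obtain ⟨hw₂, hw₂_eq⟩ := integral_max_norm_rpow_neg μ hE hR0 (by linarith : 2 < p)
  calc _ ≤ (∫ x, truncInvSq (2 * R ^ 2) (max ‖x‖ R) * (2 * K / log R) ^ 2 ∂μ) * N₁ +
            (∫ x, max ‖x‖ R ^ (-p) * 2 ^ p ∂μ) * N₂ := by
        refine integral_integral_le_of_le_mul_sub (fun x y => by positivity) (fun x y => ?_)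
          (hw₁.mul_const _) (hw₂.mul_const _) hh₁ hh₂
        have hk : 0 ≤ C * (1 + ‖x - y‖) ^ (-(4 + ε)) := by positivity
        refine (mul_le_mul_of_nonneg_right
          (sq_abs_logCutoff_sub_le hR hK (by positivity : 0 ≤ p) x y) hk).trans_eq ?_
        ring
    _ = _ := by
        rw [integral_mul_const, integral_mul_const, hw₁_eq, hw₂_eq,
          show 2 * R ^ 2 / R = 2 * R by field_simp, show 2 - p = -(ε / 2) by ring]
        field_simp

theorem tendsto_integral_integral_logCutoff {ε C : ℝ} (hε : 0 < ε) (hC : 0 ≤ C) :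
    Tendsto (fun R => ∫ x, ∫ y, |logCutoff R x - logCutoff R y| ^ 2 *
      (C * (1 + ‖x - y‖) ^ (-(4 + ε))) ∂μ ∂μ) atTop (𝓝 0) := by
  obtain ⟨A, B, hAB⟩ := exists_integral_integral_logCutoff_le μ hE hε hC
  have hlog : Tendsto (fun R => (1 / 2 + log (2 * R)) / log R ^ 2) atTop (𝓝 0) := by
    refine (tendsto_add_log_div_log_sq_atTop (1 / 2 + log 2)).congr' ?_
    filter_upwards [eventually_gt_atTop 0] with R hR
    rw [log_mul two_ne_zero hR.ne', add_assoc]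
  have hbound := (hlog.const_mul A).add
    ((tendsto_rpow_neg_atTop (by positivity : 0 < ε / 2)).const_mul B)
  rw [mul_zero, mul_zero, add_zero] at hbound
  exact squeeze_zero' (Eventually.of_forall fun R =>
      integral_nonneg fun x => integral_nonneg fun y => by positivity)
    ((eventually_gt_atTop 1).mono hAB) hbound

end Plane

/-- For every `ε > 0`, `C > 0`, `δ > 0` there is a `C²` compactly supported
`φ : ℝ² → ℝ` with `0 ≤ φ ≤ 1`, `φ = 1` on the unit disk, and
`∫∫ |φ(x) - φ(y)|² C(1+|x-y|)^{-(4+ε)} dx dy < δ`. -/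
theorem stmt_12 (ε C δ : ℝ) (hε : 0 < ε) (hC : 0 < C) (hδ : 0 < δ) :
    ∃ φ : EuclideanSpace ℝ (Fin 2) → ℝ,
      ContDiff ℝ 2 φ ∧ HasCompactSupport φ ∧
      (∀ x, 0 ≤ φ x ∧ φ x ≤ 1) ∧
      (∀ x, ‖x‖ ≤ 1 → φ x = 1) ∧
      (∫ x : EuclideanSpace ℝ (Fin 2), ∫ y : EuclideanSpace ℝ (Fin 2),
          |φ x - φ y| ^ 2 * (C * (1 + ‖x - y‖) ^ (-(4 + ε)))) < δ := by
  obtain ⟨R, hsmall, hR⟩ := ((tendsto_integral_integral_logCutoff volume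
    finrank_euclideanSpace_fin hε hC.le).eventually (gt_mem_nhds hδ)).and
      (eventually_gt_atTop 1) |>.exists
  exact ⟨logCutoff R, contDiff_logCutoff hR, hasCompactSupport_logCutoff hR,
    fun x => ⟨logCutoff_nonneg R x, logCutoff_le_one R x⟩,
    fun x hx => logCutoff_eq_one hR (hx.trans hR.le), hsmall⟩
end

section
/- Let ε > 0 and let k : ℝ² → ℝ be a measurable radial function (k(v) depends only on |v|) satisfying |k(v)| ≤ C (1 + |v|)^{−(4+ε)} for some C > 0 and all v ∈ ℝ². Let Φ : ℝ² → ℝ be twice continuously differentiable with compact support, and set Φ_R(x) = Φ(x/R). Then lim_{R → ∞} ∫_{ℝ²} ∫_{ℝ²} |Φ_R(x) − Φ_R(y)|² k(x − y) dm(x) dm(y) = ( (1/2) ∫_{ℝ²} |v|² k(v) dm(v) ) · ∫_{ℝ²} ‖∇Φ(u)‖² dm(u). -/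
/-!
Substituting `y = x - v` and then `x = R • u` turns the double integral into
`∫ R² D(v / R) k(v) dv`, where `D(w) = ∫ (Φ u - Φ (u - w))² du` is the translation defect of `Φ`.
For fixed `v`, `R² D(v / R) → ∫ ⟪∇Φ u, v⟫² du` as a squared difference quotient, and the
Lipschitz bound `D(w) ≤ 2 L² |tsupport Φ| ‖w‖²` dominates the integrand by a multiple of
`‖v‖² |k v|`, which the decay of `k` makes integrable. Finally, since `k` is radial, a reflection
exchanging `a` and `b` shows that `∫ ⟪a, v⟫² k v dv` depends only on `‖a‖`; summing over an
orthonormal basis of `ℝⁿ` gives `n ∫ ⟪a, v⟫² k v dv = ‖a‖² ∫ ‖v‖² k v dv`, with `n = 2` here.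
-/

open MeasureTheory Filter

open Metric Module Set
open scoped Topology RealInnerProductSpace Gradient

noncomputable def translationDefect {E : Type*} [AddGroup E] [MeasurableSpace E]
    (μ : Measure E) (f : E → ℝ) (w : E) : ℝ :=
  ∫ u, (f u - f (u - w)) ^ 2 ∂μ

section Decay

variable {E : Type*} [NormedAddCommGroup E] [NormedSpace ℝ E] [FiniteDimensional ℝ E]
  [MeasurableSpace E] [BorelSpace E] {μ : Measure E} [μ.IsAddHaarMeasure]

theorem integrable_norm_pow_mul_of_abs_le_rpow {k : E → ℝ} {C r : ℝ} (p : ℕ)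
    (hr : (finrank ℝ E : ℝ) + p < r) (hk : AEStronglyMeasurable k μ)
    (hbd : ∀ v, |k v| ≤ C * (1 + ‖v‖) ^ (-r)) :
    Integrable (fun v => ‖v‖ ^ p * k v) μ := by
  refine ((integrable_one_add_norm (r := r - p) (by linarith)).const_mul C).mono'
    ((continuous_norm.pow p).aestronglyMeasurable.mul hk) (Eventually.of_forall fun v => ?_)
  have hv : 0 < 1 + ‖v‖ := by positivity
  calc ‖‖v‖ ^ p * k v‖ = ‖v‖ ^ p * |k v| := by
        rw [norm_mul, norm_pow, norm_norm, Real.norm_eq_abs]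
    _ ≤ (1 + ‖v‖) ^ (p : ℝ) * (C * (1 + ‖v‖) ^ (-r)) := by
        rw [Real.rpow_natCast]
        exact mul_le_mul (pow_le_pow_left₀ (norm_nonneg v) (by linarith) p) (hbd v)
          (abs_nonneg _) (by positivity)
    _ = C * (1 + ‖v‖) ^ (-(r - p)) := by
        rw [mul_left_comm, ← Real.rpow_add hv]; ring_nf

end Decay

section Pointwise

variable {E : Type*} [NormedAddCommGroup E] {f : E → ℝ} {L : NNReal}

theorem LipschitzWith.sq_sub_apply_sub_le (hf : LipschitzWith L f) (u w : E) :
    (f u - f (u - w)) ^ 2 ≤ L ^ 2 * ‖w‖ ^ 2 := by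
  have h := hf.dist_le_mul u (u - w)
  rw [Real.dist_eq, dist_eq_norm, sub_sub_cancel] at h
  rw [← sq_abs, ← mul_pow]
  exact pow_le_pow_left₀ (abs_nonneg _) h 2

theorem sub_apply_sub_eq_zero_of_notMem_tsupport {u w : E} (hu : u ∉ tsupport f)
    (huw : u - w ∉ tsupport f) :
    f u - f (u - w) = 0 := by
  rw [image_eq_zero_of_notMem_tsupport hu, image_eq_zero_of_notMem_tsupport huw, sub_zero]

theorem LipschitzWith.sq_sub_apply_sub_le_indicator (hf : LipschitzWith L f) {δ : ℝ} {w : E}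
    (hw : ‖w‖ ≤ δ) (u : E) :
    (f u - f (u - w)) ^ 2 ≤
      (cthickening δ (tsupport f)).indicator (fun _ => L ^ 2 * ‖w‖ ^ 2) u := by
  by_cases hu : u ∈ cthickening δ (tsupport f)
  · rw [indicator_of_mem hu]
    exact hf.sq_sub_apply_sub_le u w
  · rw [indicator_of_notMem hu, sub_apply_sub_eq_zero_of_notMem_tsupport, zero_pow two_ne_zero]
    · exact fun h => hu (self_subset_cthickening _ h)
    · refine fun h => hu (mem_cthickening_of_dist_le u (u - w) δ _ h ?_)
      rwa [dist_eq_norm, sub_sub_cancel]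

end Pointwise

section Gradient

variable {E : Type*} [NormedAddCommGroup E] [InnerProductSpace ℝ E] [CompleteSpace E]
  {f : E → ℝ}

theorem DifferentiableAt.tendsto_mul_sub_apply_sub_inv_smul {u : E} (hf : DifferentiableAt ℝ f u)
    (v : E) :
    Tendsto (fun R : ℝ => R * (f u - f (u - R⁻¹ • v))) atTop (𝓝 ⟪∇ f u, v⟫) := by
  have hslope := (hf.hasFDerivAt.hasLineDerivAt (-v)).tendsto_slope_zero_right.comp
    tendsto_inv_atTop_nhdsGT_zero
  rw [map_neg, ← inner_gradient_left] at hslope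
  convert hslope.neg using 2 with R
  · simp only [Function.comp_apply, inv_inv, smul_eq_mul, smul_neg, ← sub_eq_add_neg]
    ring
  · simp

theorem ContDiff.continuous_gradient (hf : ContDiff ℝ 1 f) : Continuous (∇ f) :=
  (InnerProductSpace.toDual ℝ E).symm.continuous.comp (hf.continuous_fderiv one_ne_zero)

theorem HasCompactSupport.gradient (hf : HasCompactSupport f) : HasCompactSupport (∇ f) :=
  hf.fderiv ℝ |>.comp_left (g := (InnerProductSpace.toDual ℝ E).symm) (map_zero _)

end Gradient

section TranslationDefect

variable {E : Type*} [NormedAddCommGroup E] [MeasurableSpace E] [BorelSpace E]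
  {μ : Measure E} {f : E → ℝ}

theorem stronglyMeasurable_translationDefect [SecondCountableTopology E] [SFinite μ]
    (hf : Continuous f) : StronglyMeasurable (translationDefect μ f) :=
  ((hf.comp continuous_snd).sub (hf.comp (continuous_snd.sub continuous_fst))).pow 2
    |>.stronglyMeasurable.integral_prod_right'

theorem translationDefect_le [μ.IsAddRightInvariant] [IsFiniteMeasureOnCompacts μ] {L : NNReal}
    (hf : LipschitzWith L f) (hfs : HasCompactSupport f) (w : E) :
    translationDefect μ f w ≤ 2 * L ^ 2 * μ.real (tsupport f) * ‖w‖ ^ 2 := by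
  set S := tsupport f
  set c := (L : ℝ) ^ 2 * ‖w‖ ^ 2
  have hS : MeasurableSet S := (isClosed_tsupport f).measurableSet
  have hind : Integrable (S.indicator fun _ => c) μ :=
    (integrable_indicator_iff hS).2 (integrableOn_const hfs.measure_lt_top.ne)
  have hbound : ∀ u, (f u - f (u - w)) ^ 2 ≤ S.indicator (fun _ => c) u
      + S.indicator (fun _ => c) (u - w) := by
    intro u
    by_cases hu : u ∈ S
    · have := indicator_nonneg (fun _ _ => by positivity : ∀ x ∈ S, 0 ≤ c) (u - w)
      rw [indicator_of_mem hu]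
      linarith [hf.sq_sub_apply_sub_le u w]
    by_cases huw : u - w ∈ S
    · rw [indicator_of_notMem hu, indicator_of_mem huw, zero_add]
      exact hf.sq_sub_apply_sub_le u w
    · rw [sub_apply_sub_eq_zero_of_notMem_tsupport hu huw, indicator_of_notMem hu,
        indicator_of_notMem huw]
      norm_num
  calc translationDefect μ f w
      ≤ ∫ u, S.indicator (fun _ => c) u + S.indicator (fun _ => c) (u - w) ∂μ :=
        integral_mono_of_nonneg (Eventually.of_forall fun u => sq_nonneg _)
          (hind.add (hind.comp_sub_right w)) (Eventually.of_forall hbound)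
    _ = 2 * L ^ 2 * μ.real S * ‖w‖ ^ 2 := by
        rw [integral_add hind (hind.comp_sub_right w),
          integral_sub_right_eq_self (fun u => S.indicator (fun _ => c) u) w,
          integral_indicator_const _ hS, smul_eq_mul]
        ring

end TranslationDefect

section Limit

variable {E : Type*} [NormedAddCommGroup E] [InnerProductSpace ℝ E] [ProperSpace E]
  [MeasurableSpace E] [BorelSpace E] {μ : Measure E} [IsFiniteMeasureOnCompacts μ] {f : E → ℝ}

theorem tendsto_sq_mul_translationDefect (hf : ContDiff ℝ 1 f) (hfs : HasCompactSupport f)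
    (v : E) :
    Tendsto (fun R : ℝ => R ^ 2 * translationDefect μ f (R⁻¹ • v)) atTop
      (𝓝 (∫ u, ⟪∇ f u, v⟫ ^ 2 ∂μ)) := by
  obtain ⟨L, hL⟩ := hf.lipschitzWith_of_hasCompactSupport hfs one_ne_zero
  set K := cthickening 1 (tsupport f)
  have hK : MeasurableSet K := isClosed_cthickening.measurableSet
  simp_rw [translationDefect, ← integral_const_mul, ← mul_pow]
  refine tendsto_integral_filter_of_dominated_convergence (K.indicator fun _ => L ^ 2 * ‖v‖ ^ 2)
    (Eventually.of_forall fun R => ?_) ?_ ?_ (Eventually.of_forall fun u => ?_)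
  · exact (continuous_const.mul (hf.continuous.sub (hf.continuous.comp
      (continuous_id.sub continuous_const)))).pow 2 |>.aestronglyMeasurable
  · filter_upwards [eventually_ge_atTop (max ‖v‖ 1)] with R hR
    have hR0 : 0 < R := lt_of_lt_of_le one_pos (le_of_max_le_right hR)
    have hw : ‖R⁻¹ • v‖ ≤ 1 := by
      rw [norm_smul, norm_inv, Real.norm_of_nonneg hR0.le]
      exact inv_mul_le_one_of_le₀ (le_of_max_le_left hR) hR0.le
    have hnorm : R ^ 2 * ‖R⁻¹ • v‖ ^ 2 = ‖v‖ ^ 2 := by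
      rw [norm_smul, norm_inv, Real.norm_of_nonneg hR0.le]; field_simp
    refine Eventually.of_forall fun u => ?_
    calc ‖(R * (f u - f (u - R⁻¹ • v))) ^ 2‖
        = R ^ 2 * (f u - f (u - R⁻¹ • v)) ^ 2 := by
          rw [norm_pow, Real.norm_eq_abs, sq_abs, mul_pow]
      _ ≤ R ^ 2 * K.indicator (fun _ => L ^ 2 * ‖R⁻¹ • v‖ ^ 2) u :=
          mul_le_mul_of_nonneg_left (hL.sq_sub_apply_sub_le_indicator hw u) (sq_nonneg R)
      _ = K.indicator (fun _ => L ^ 2 * ‖v‖ ^ 2) u := by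
          by_cases huK : u ∈ K
          · simp only [indicator_of_mem huK, ← hnorm]; ring
          · simp only [indicator_of_notMem huK, mul_zero]
  · exact (integrable_indicator_iff hK).2
      (integrableOn_const (hfs.cthickening.measure_lt_top).ne)
  · exact ((hf.differentiable one_ne_zero u).tendsto_mul_sub_apply_sub_inv_smul v).pow 2

theorem tendsto_integral_sq_mul_translationDefect_mul [μ.IsAddRightInvariant] [SFinite μ]
    (hf : ContDiff ℝ 1 f) (hfs : HasCompactSupport f) {k : E → ℝ}
    (hk : AEStronglyMeasurable k μ) (hk_moment : Integrable (fun v => ‖v‖ ^ 2 * k v) μ) :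
    Tendsto (fun R : ℝ => ∫ v, R ^ 2 * translationDefect μ f (R⁻¹ • v) * k v ∂μ) atTop
      (𝓝 (∫ v, (∫ u, ⟪∇ f u, v⟫ ^ 2 ∂μ) * k v ∂μ)) := by
  obtain ⟨L, hL⟩ := hf.lipschitzWith_of_hasCompactSupport hfs one_ne_zero
  set A := 2 * (L : ℝ) ^ 2 * μ.real (tsupport f)
  refine tendsto_integral_filter_of_dominated_convergence (fun v => A * ‖‖v‖ ^ 2 * k v‖)
    (Eventually.of_forall fun R => ?_) ?_ (hk_moment.norm.const_mul A)
    (Eventually.of_forall fun v => (tendsto_sq_mul_translationDefect hf hfs v).mul_const (k v))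
  · exact (aestronglyMeasurable_const.mul ((stronglyMeasurable_translationDefect
      hf.continuous).comp_measurable (measurable_const_smul R⁻¹)).aestronglyMeasurable).mul hk
  · filter_upwards [eventually_gt_atTop 0] with R hR
    refine Eventually.of_forall fun v => ?_
    have hD0 : 0 ≤ translationDefect μ f (R⁻¹ • v) := integral_nonneg fun _ => sq_nonneg _
    have hnorm : R ^ 2 * ‖R⁻¹ • v‖ ^ 2 = ‖v‖ ^ 2 := by
      rw [norm_smul, norm_inv, Real.norm_of_nonneg hR.le]; field_simp
    calc ‖R ^ 2 * translationDefect μ f (R⁻¹ • v) * k v‖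
        = R ^ 2 * translationDefect μ f (R⁻¹ • v) * ‖k v‖ := by
          rw [norm_mul, Real.norm_of_nonneg (by positivity)]
      _ ≤ R ^ 2 * (A * ‖R⁻¹ • v‖ ^ 2) * ‖k v‖ := by
          gcongr; exact translationDefect_le hL hfs _
      _ = A * ‖‖v‖ ^ 2 * k v‖ := by
          rw [norm_mul, norm_pow, norm_norm, ← hnorm]; ring

end Limit

section ChangeOfVariables

variable {E : Type*} [NormedAddCommGroup E] [NormedSpace ℝ E] [MeasurableSpace E] [BorelSpace E]
  {μ : Measure E} {f : E → ℝ}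

theorem translationDefect_comp_inv_smul [FiniteDimensional ℝ E] [μ.IsAddHaarMeasure] {R : ℝ}
    (hR : 0 ≤ R) (v : E) :
    translationDefect μ (fun x => f (R⁻¹ • x)) v =
      R ^ finrank ℝ E * translationDefect μ f (R⁻¹ • v) := by
  simp_rw [translationDefect, smul_sub]
  rw [Measure.integral_comp_inv_smul_of_nonneg μ (fun u => (f u - f (u - R⁻¹ • v)) ^ 2) hR,
    smul_eq_mul]

theorem integral_integral_sq_sub_mul_sub [FiniteDimensional ℝ E] [μ.IsAddHaarMeasure]
    (hf : Continuous f) (hfs : HasCompactSupport f) {k : E → ℝ} (hk : Integrable k μ) :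
    ∫ x, ∫ y, (f x - f y) ^ 2 * k (x - y) ∂μ ∂μ = ∫ v, translationDefect μ f v * k v ∂μ := by
  have hfs2 : HasCompactSupport (fun x => f x ^ 2) := hfs.comp_left (g := (· ^ 2)) (by simp)
  have hf2 : Integrable (fun x => f x ^ 2) μ := (hf.pow 2).integrable_of_hasCompactSupport hfs2
  have hdom₁ : Integrable (fun p : E × E => 2 * f p.1 ^ 2 * |k p.2|) (μ.prod μ) :=
    (hf2.const_mul 2).mul_prod (f := fun x => 2 * f x ^ 2) (g := fun v => |k v|) hk.abs
  have hdom₂ : Integrable (fun p : E × E => 2 * f (p.1 - p.2) ^ 2 * |k p.2|) (μ.prod μ) :=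
    ((measurePreserving_sub_prod μ μ).integrable_comp hdom₁.aestronglyMeasurable).2 hdom₁
  have hprod : Integrable (Function.uncurry fun x v => (f x - f (x - v)) ^ 2 * k v) (μ.prod μ) := by
    refine (hdom₁.add hdom₂).mono' (((hf.comp continuous_fst).sub (hf.comp
      (continuous_fst.sub continuous_snd))).pow 2 |>.aestronglyMeasurable.mul hk.1.comp_snd)
      (Eventually.of_forall fun p => ?_)
    rw [Function.uncurry_apply_pair, norm_mul, Real.norm_of_nonneg (sq_nonneg _), Real.norm_eq_abs]
    have hsq : (f p.1 - f (p.1 - p.2)) ^ 2 ≤ 2 * f p.1 ^ 2 + 2 * f (p.1 - p.2) ^ 2 := by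
      nlinarith [sq_nonneg (f p.1 + f (p.1 - p.2))]
    calc (f p.1 - f (p.1 - p.2)) ^ 2 * |k p.2|
        ≤ (2 * f p.1 ^ 2 + 2 * f (p.1 - p.2) ^ 2) * |k p.2| := by gcongr
      _ = _ := by rw [Pi.add_apply]; ring
  calc ∫ x, ∫ y, (f x - f y) ^ 2 * k (x - y) ∂μ ∂μ
      = ∫ x, ∫ v, (f x - f (x - v)) ^ 2 * k v ∂μ ∂μ := by
        congr 1 with x
        rw [← integral_sub_left_eq_self _ μ x]
        simp_rw [sub_sub_cancel]
    _ = ∫ v, ∫ x, (f x - f (x - v)) ^ 2 * k v ∂μ ∂μ := integral_integral_swap hprod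
    _ = ∫ v, translationDefect μ f v * k v ∂μ := by simp_rw [integral_mul_const, translationDefect]

end ChangeOfVariables

section Radial

variable {E : Type*} [NormedAddCommGroup E] [InnerProductSpace ℝ E] [FiniteDimensional ℝ E]
  [MeasurableSpace E] [BorelSpace E] {k : E → ℝ}

theorem integrable_inner_sq_mul (hk : AEStronglyMeasurable k)
    (hk_moment : Integrable (fun v => ‖v‖ ^ 2 * k v)) (w : E) :
    Integrable (fun v => ⟪w, v⟫ ^ 2 * k v) := by
  refine (hk_moment.norm.const_mul (‖w‖ ^ 2)).mono'
    (((continuous_const.inner continuous_id).pow 2).aestronglyMeasurable.mul hk)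
    (Eventually.of_forall fun v => ?_)
  rw [norm_mul, norm_mul, norm_pow, norm_pow, norm_norm, Real.norm_eq_abs, ← mul_assoc, ← mul_pow]
  gcongr
  exact abs_real_inner_le_norm w v

theorem integral_inner_sq_mul_eq_of_norm_eq
    (hrad : ∀ v w : E, ‖v‖ = ‖w‖ → k v = k w) {a b : E} (hab : ‖a‖ = ‖b‖) :
    ∫ v, ⟪a, v⟫ ^ 2 * k v = ∫ v, ⟪b, v⟫ ^ 2 * k v := by
  set T := Submodule.reflection (ℝ ∙ (a - b))ᗮ
  have hTa : T a = b := Submodule.reflection_sub hab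
  rw [← T.measurePreserving.integral_comp T.toMeasurableEquiv.measurableEmbedding
    (fun v => ⟪b, v⟫ ^ 2 * k v)]
  congr 1 with v
  rw [← hTa, T.inner_map_map, hrad (T v) v (T.norm_map v)]

theorem finrank_mul_integral_inner_sq_mul (hk : AEStronglyMeasurable k)
    (hrad : ∀ v w : E, ‖v‖ = ‖w‖ → k v = k w) (hk_moment : Integrable (fun v => ‖v‖ ^ 2 * k v))
    (w : E) :
    finrank ℝ E * ∫ v, ⟪w, v⟫ ^ 2 * k v = ‖w‖ ^ 2 * ∫ v, ‖v‖ ^ 2 * k v := by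
  set e := stdOrthonormalBasis ℝ E
  have hsum : ∀ v, ∑ i, ⟪e i, v⟫ ^ 2 = ‖v‖ ^ 2 := fun v => by
    simp_rw [← real_inner_self_eq_norm_sq, ← e.sum_inner_mul_inner v v, sq, real_inner_comm]
  calc finrank ℝ E * ∫ v, ⟪w, v⟫ ^ 2 * k v
      = ∑ i, ∫ v, ⟪‖w‖ • e i, v⟫ ^ 2 * k v := by
        rw [Finset.sum_congr rfl fun i _ => integral_inner_sq_mul_eq_of_norm_eq hrad
          (a := ‖w‖ • e i) (b := w) (by simp [norm_smul, e.orthonormal.1 i])]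
        simp
    _ = ∫ v, ∑ i, ⟪‖w‖ • e i, v⟫ ^ 2 * k v :=
        (integral_finsetSum _ fun i _ => integrable_inner_sq_mul hk hk_moment _).symm
    _ = ‖w‖ ^ 2 * ∫ v, ‖v‖ ^ 2 * k v := by
        simp_rw [real_inner_smul_left, mul_pow, mul_assoc, ← Finset.mul_sum, ← Finset.sum_mul,
          hsum]
        exact integral_const_mul _ _

theorem finrank_mul_integral_integral_inner_sq_mul {α : Type*} [MeasurableSpace α]
    {ν : Measure α} [SFinite ν] {g : α → E} (hg : AEStronglyMeasurable g ν)
    (hg_sq : Integrable (fun u => ‖g u‖ ^ 2) ν) (hk : AEStronglyMeasurable k)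
    (hrad : ∀ v w : E, ‖v‖ = ‖w‖ → k v = k w) (hk_moment : Integrable (fun v => ‖v‖ ^ 2 * k v)) :
    finrank ℝ E * ∫ v, (∫ u, ⟪g u, v⟫ ^ 2 ∂ν) * k v =
      (∫ v, ‖v‖ ^ 2 * k v) * ∫ u, ‖g u‖ ^ 2 ∂ν := by
  have hprod : Integrable (Function.uncurry fun v u => ⟪g u, v⟫ ^ 2 * k v) (volume.prod ν) := by
    refine (hk_moment.norm.mul_prod hg_sq).mono'
      ((hg.comp_snd.inner measurable_fst.aestronglyMeasurable).pow 2 |>.mul hk.comp_fst)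
      (Eventually.of_forall fun p => ?_)
    calc ‖⟪g p.2, p.1⟫ ^ 2 * k p.1‖ = |⟪g p.2, p.1⟫| ^ 2 * ‖k p.1‖ := by
          rw [norm_mul, norm_pow, Real.norm_eq_abs]
      _ ≤ (‖g p.2‖ * ‖p.1‖) ^ 2 * ‖k p.1‖ := by gcongr; exact abs_real_inner_le_norm _ _
      _ = ‖‖p.1‖ ^ 2 * k p.1‖ * ‖g p.2‖ ^ 2 := by rw [norm_mul, norm_pow, norm_norm]; ring
  calc finrank ℝ E * ∫ v, (∫ u, ⟪g u, v⟫ ^ 2 ∂ν) * k v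
      = ∫ u, finrank ℝ E * ∫ v, ⟪g u, v⟫ ^ 2 * k v ∂volume ∂ν := by
        simp_rw [← integral_mul_const, integral_integral_swap hprod, integral_const_mul]
    _ = ∫ u, (∫ v, ‖v‖ ^ 2 * k v) * ‖g u‖ ^ 2 ∂ν := by
        simp_rw [finrank_mul_integral_inner_sq_mul hk hrad hk_moment, mul_comm]
    _ = (∫ v, ‖v‖ ^ 2 * k v) * ∫ u, ‖g u‖ ^ 2 ∂ν := integral_const_mul _ _

end Radial

theorem stmt_13_general (ε : ℝ) (hε : 0 < ε)
    (k : EuclideanSpace ℝ (Fin 2) → ℝ) (hkmeas : Measurable k)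
    (hkradial : ∀ v w : EuclideanSpace ℝ (Fin 2), ‖v‖ = ‖w‖ → k v = k w)
    (C : ℝ)
    (hkbd : ∀ v, |k v| ≤ C * (1 + ‖v‖) ^ (-(4 + ε)))
    (Φ : EuclideanSpace ℝ (Fin 2) → ℝ)
    (hΦ : ContDiff ℝ 2 Φ) (hsupp : HasCompactSupport Φ) :
    Tendsto (fun R : ℝ =>
        ∫ x : EuclideanSpace ℝ (Fin 2), ∫ y : EuclideanSpace ℝ (Fin 2),
          |Φ (R⁻¹ • x) - Φ (R⁻¹ • y)| ^ 2 * k (x - y)) atTop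
      (nhds (((1 / 2) * ∫ v : EuclideanSpace ℝ (Fin 2), ‖v‖ ^ 2 * k v)
        * ∫ u, ‖gradient Φ u‖ ^ 2)) := by
  have hdim : finrank ℝ (EuclideanSpace ℝ (Fin 2)) = 2 := finrank_euclideanSpace_fin
  have hk := hkmeas.aestronglyMeasurable (μ := volume)
  have hk_int : Integrable k := by
    simpa using integrable_norm_pow_mul_of_abs_le_rpow 0 (by rw [hdim]; push_cast; linarith) hk hkbd
  have hk_moment :=
    integrable_norm_pow_mul_of_abs_le_rpow 2 (by rw [hdim]; push_cast; linarith) hk hkbd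
  have hΦ1 : ContDiff ℝ 1 Φ := hΦ.of_le (by norm_num)
  have hgrad := hΦ1.continuous_gradient
  have hgrad_sq : HasCompactSupport fun u => ‖∇ Φ u‖ ^ 2 :=
    hsupp.gradient.comp_left (g := fun x => ‖x‖ ^ 2) (by simp)
  have hlimit := tendsto_integral_sq_mul_translationDefect_mul (μ := volume) hΦ1 hsupp hk hk_moment
  have hvalue := finrank_mul_integral_integral_inner_sq_mul (ν := volume) hgrad.aestronglyMeasurable
    ((hgrad.norm.pow 2).integrable_of_hasCompactSupport hgrad_sq) hk hkradial hk_moment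
  rw [hdim] at hvalue
  rw [show (1 / 2 * ∫ v, ‖v‖ ^ 2 * k v) * ∫ u, ‖∇ Φ u‖ ^ 2 =
      ∫ v, (∫ u, ⟪∇ Φ u, v⟫ ^ 2) * k v by push_cast at hvalue; linarith]
  refine hlimit.congr' ?_
  filter_upwards [eventually_gt_atTop 0] with R hR
  have hΦR : HasCompactSupport fun x => Φ (R⁻¹ • x) := hsupp.comp_smul (inv_ne_zero hR.ne')
  simp_rw [sq_abs]
  rw [integral_integral_sq_sub_mul_sub (f := fun x => Φ (R⁻¹ • x))
    (hΦ.continuous.comp (continuous_const_smul _)) hΦR hk_int]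
  simp_rw [translationDefect_comp_inv_smul hR.le, hdim]

/-- For a measurable radial kernel `k : ℝ² → ℝ` with `|k(v)| ≤ C(1+|v|)^{-(4+ε)}`
and a `C²` compactly supported `Φ : ℝ² → ℝ`, with `Φ_R(x) = Φ(x/R)`,
`∫∫ |Φ_R(x) - Φ_R(y)|² k(x-y) dx dy → ((1/2) ∫ |v|² k(v) dv) ∫ ‖∇Φ‖²`
as `R → ∞`. -/
theorem stmt_13 (ε : ℝ) (hε : 0 < ε)
    (k : EuclideanSpace ℝ (Fin 2) → ℝ) (hkmeas : Measurable k)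
    (hkradial : ∀ v w : EuclideanSpace ℝ (Fin 2), ‖v‖ = ‖w‖ → k v = k w)
    (C : ℝ) (hC : 0 < C)
    (hkbd : ∀ v, |k v| ≤ C * (1 + ‖v‖) ^ (-(4 + ε)))
    (Φ : EuclideanSpace ℝ (Fin 2) → ℝ)
    (hΦ : ContDiff ℝ 2 Φ) (hsupp : HasCompactSupport Φ) :
    Tendsto (fun R : ℝ =>
        ∫ x : EuclideanSpace ℝ (Fin 2), ∫ y : EuclideanSpace ℝ (Fin 2),
          |Φ (R⁻¹ • x) - Φ (R⁻¹ • y)| ^ 2 * k (x - y)) atTop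
      (nhds (((1 / 2) * ∫ v : EuclideanSpace ℝ (Fin 2), ‖v‖ ^ 2 * k v)
        * ∫ u, ‖gradient Φ u‖ ^ 2)) :=
  stmt_13_general ε hε k hkmeas hkradial C hkbd Φ hΦ hsupp
end

section
/- Let C > 0 and δ > 0. There exists a continuously differentiable function φ : ℝ → ℝ with compact support such that 0 ≤ φ ≤ 1, φ(x) = 1 for all |x| ≤ 1, and ∫_ℝ ∫_ℝ |φ(x) − φ(y)|² C (1 + |x − y|)^{−2} dx dy < δ. -/
/-!
Take `φ x = ψ (2 - log (1 + x²) / S)` with `ψ` a smooth transition from `0` to `1`.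
Then `φ = 1` on `[-1, 1]`, `φ = 0` for `|x| ≥ e^S`, and `φ` is `O(1/S)`-Lipschitz for the
distance `|log (1 + |x|) - log (1 + |y|)|`. Writing `P = 1 + |x|`, `Q = 1 + |y|`, the
bound `|P - Q| ≤ |x - y|` gives `(log P - log Q)² / (1 + |x - y|)² ≤ k (Q / P) / P²` with
`k r = (log r / (r - 1))²` integrable on `(0, ∞)`, so the inner integral is
`O(S⁻² / (1 + |x|))`.
Integrating this over `|x| ≤ e^{2S}` costs a factor `O(S)`; for larger `|x|` only `|y| ≤ e^S`
contributes, which gives `O(e^{-S})`. Hence the double integral is `O(1/S)`.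
-/

open MeasureTheory Set Real

namespace LogPlateau

lemma integrable_comp_abs {f : ℝ → ℝ} (hf : IntegrableOn f (Ioi 0)) :
    Integrable fun x => f |x| := by
  have hIoi : IntegrableOn (fun x => f |x|) (Ioi 0) :=
    hf.congr_fun (fun x hx => by rw [abs_of_pos hx]) measurableSet_Ioi
  have hIic : IntegrableOn (fun x => f |x|) (Iic 0) := by
    rw [← Measure.map_neg_eq_self (volume : Measure ℝ),
      measurableEmbedding_neg.integrableOn_map_iff]
    simpa [Function.comp_def] using
      (integrableOn_Ici_iff_integrableOn_Ioi (μ := volume)).mpr hIoi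
  simpa using hIic.union hIoi

section OneAddDiv

variable {g : ℝ → ℝ} {P : ℝ}

lemma hasDerivWithinAt_one_add_div (t : ℝ) (s : Set ℝ) :
    HasDerivWithinAt (fun t => (1 + t) / P) P⁻¹ s t := by
  simpa using ((hasDerivAt_id t).const_add 1).div_const P |>.hasDerivWithinAt

lemma injOn_one_add_div (hP : 0 < P) : InjOn (fun t : ℝ => (1 + t) / P) (Ioi 0) :=
  fun a _ b _ h => by simpa [hP.ne'] using h

lemma image_one_add_div_subset (hP : 0 < P) : (fun t : ℝ => (1 + t) / P) '' Ioi 0 ⊆ Ioi 0 := by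
  rintro _ ⟨t, ht, rfl⟩
  exact div_pos (by linarith [ht.out]) hP

lemma integrableOn_comp_one_add_div (hg : IntegrableOn g (Ioi 0)) (hP : 0 < P) :
    IntegrableOn (fun t => g ((1 + t) / P)) (Ioi 0) := by
  have := (integrableOn_image_iff_integrableOn_abs_deriv_smul measurableSet_Ioi
    (fun t _ => hasDerivWithinAt_one_add_div t _) (injOn_one_add_div hP) g).mp
    (hg.mono_set (image_one_add_div_subset hP))
  refine IntegrableOn.congr_fun (this.const_mul P) (fun t _ => ?_) measurableSet_Ioi
  simp [abs_of_pos hP, hP.ne']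

lemma setIntegral_comp_one_add_div_le (hg : IntegrableOn g (Ioi 0))
    (hg₀ : ∀ r ∈ Ioi 0, 0 ≤ g r) (hP : 0 < P) :
    ∫ t in Ioi 0, g ((1 + t) / P) ≤ P * ∫ r in Ioi 0, g r := by
  have e := integral_image_eq_integral_abs_deriv_smul measurableSet_Ioi
    (fun t _ => hasDerivWithinAt_one_add_div t _) (injOn_one_add_div hP) g
  rw [integral_smul, abs_of_pos (inv_pos.mpr hP), smul_eq_mul] at e
  calc ∫ t in Ioi 0, g ((1 + t) / P) = P * ∫ r in (fun t => (1 + t) / P) '' Ioi 0, g r := by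
        rw [e, mul_inv_cancel_left₀ hP.ne']
    _ ≤ P * ∫ r in Ioi 0, g r :=
        mul_le_mul_of_nonneg_left (setIntegral_mono_set hg
          (ae_restrict_of_forall_mem measurableSet_Ioi hg₀)
          (image_one_add_div_subset hP).eventuallyLE) hP.le

end OneAddDiv

noncomputable def radialMajorant (a b X t : ℝ) : ℝ :=
  if t ≤ X then a * (1 + t)⁻¹ else b * ((1 + t) ^ 2)⁻¹

section RadialMajorant

variable {a b X : ℝ}

lemma hasDerivAt_neg_inv_one_add {t : ℝ} (ht : 0 < 1 + t) :
    HasDerivAt (fun s => -(1 + s)⁻¹) ((1 + t) ^ 2)⁻¹ t :=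
  (((hasDerivAt_id t).const_add 1).inv ht.ne').neg.congr_deriv (by simp [neg_div])

lemma tendsto_neg_inv_one_add :
    Filter.Tendsto (fun s : ℝ => -(1 + s)⁻¹) Filter.atTop (nhds 0) := by
  simpa using (tendsto_inv_atTop_zero.comp
    (Filter.tendsto_atTop_add_const_left _ (1 : ℝ) Filter.tendsto_id)).neg

lemma integrableOn_Ioi_inv_sq_one_add (hX : -1 < X) :
    IntegrableOn (fun t => ((1 + t) ^ 2)⁻¹) (Ioi X) :=
  integrableOn_Ioi_deriv_of_nonneg'
    (fun t ht => hasDerivAt_neg_inv_one_add (by linarith [ht.out]))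
    (fun t _ => by positivity) tendsto_neg_inv_one_add

lemma integral_Ioi_inv_sq_one_add (hX : -1 < X) :
    ∫ t in Ioi X, ((1 + t) ^ 2)⁻¹ = (1 + X)⁻¹ := by
  rw [integral_Ioi_of_hasDerivAt_of_nonneg'
    (fun t ht => hasDerivAt_neg_inv_one_add (by linarith [ht.out]))
    (fun t _ => by positivity) tendsto_neg_inv_one_add]
  ring

lemma integral_inv_one_add (hX : -1 < X) : ∫ t in (0)..X, (1 + t)⁻¹ = log (1 + X) := by
  rw [intervalIntegral.integral_comp_add_left (fun t => t⁻¹),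
    integral_inv_of_pos (by norm_num) (by linarith)]
  simp

lemma integrableOn_Ioc_radialMajorant : IntegrableOn (radialMajorant a b X) (Ioc 0 X) := by
  have hcont : ContinuousOn (fun t => a * (1 + t)⁻¹) (Icc 0 X) :=
    continuousOn_const.mul <| ContinuousOn.inv₀ (by fun_prop) fun t ht =>
      (by linarith [ht.1] : (0 : ℝ) < 1 + t).ne'
  refine (hcont.integrableOn_Icc.mono_set Ioc_subset_Icc_self).congr_fun (fun t ht => ?_)
    measurableSet_Ioc
  simp [radialMajorant, ht.2]

lemma integrableOn_Ioi_radialMajorant (hX : -1 < X) :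
    IntegrableOn (radialMajorant a b X) (Ioi X) := by
  refine IntegrableOn.congr_fun ((integrableOn_Ioi_inv_sq_one_add hX).const_mul b)
    (fun t ht => ?_) measurableSet_Ioi
  simp [radialMajorant, not_le.mpr ht.out]

lemma integrableOn_radialMajorant (hX : 0 ≤ X) :
    IntegrableOn (radialMajorant a b X) (Ioi 0) := by
  rw [← Ioc_union_Ioi_eq_Ioi hX]
  exact integrableOn_Ioc_radialMajorant.union (integrableOn_Ioi_radialMajorant (by linarith))

lemma setIntegral_radialMajorant (hX : 0 ≤ X) :
    ∫ t in Ioi 0, radialMajorant a b X t = a * log (1 + X) + b * (1 + X)⁻¹ := by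
  rw [← Ioc_union_Ioi_eq_Ioi hX, setIntegral_union (Ioc_disjoint_Ioi le_rfl) measurableSet_Ioi
    integrableOn_Ioc_radialMajorant (integrableOn_Ioi_radialMajorant (by linarith)),
    setIntegral_congr_fun measurableSet_Ioc (g := fun t => a * (1 + t)⁻¹)
      (fun t ht => by simp [radialMajorant, ht.2]),
    setIntegral_congr_fun measurableSet_Ioi (g := fun t => b * ((1 + t) ^ 2)⁻¹)
      (fun t ht => by simp [radialMajorant, not_le.mpr ht.out]),
    integral_const_mul, integral_const_mul, ← intervalIntegral.integral_of_le hX,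
    integral_inv_one_add (by linarith), integral_Ioi_inv_sq_one_add (by linarith)]

end RadialMajorant

/-- At `r = 1` the junk value `0` is harmless, since `log 1 = 0`. -/
noncomputable def logRatioSq (r : ℝ) : ℝ := (log r / (r - 1)) ^ 2

lemma logRatioSq_nonneg (r : ℝ) : 0 ≤ logRatioSq r := sq_nonneg _

lemma measurable_logRatioSq : Measurable logRatioSq := by
  unfold logRatioSq
  fun_prop

lemma logRatioSq_inv (r : ℝ) : logRatioSq r⁻¹ = r ^ 2 * logRatioSq r := by
  rcases eq_or_ne r 0 with rfl | hr
  · simp [logRatioSq]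
  rw [logRatioSq, logRatioSq, log_inv, div_pow, div_pow, neg_sq,
    show (r⁻¹ - 1) ^ 2 = (r - 1) ^ 2 / r ^ 2 by field_simp; ring, div_div_eq_mul_div]
  ring

lemma logRatioSq_le_of_one_le {r : ℝ} (hr : 1 ≤ r) :
    logRatioSq r ≤ 16 * r ^ (-3 / 2 : ℝ) := by
  obtain ⟨t, ht, rfl⟩ : ∃ t : ℝ, 1 ≤ t ∧ t ^ 4 = r :=
    ⟨r ^ (4⁻¹ : ℝ), one_le_rpow hr (by norm_num), by
      rw [← rpow_natCast, ← rpow_mul (by linarith)]; norm_num⟩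
  rcases ht.eq_or_lt with rfl | ht₁
  · simp [logRatioSq]
  have hpos : 0 < t ^ 4 - 1 := by linarith [one_lt_pow₀ ht₁ (n := 4) (by norm_num)]
  -- `log (t ^ 4) = 4 log t ≤ 4 (t - 1) ≤ 4 (t ^ 4 - 1) / t ^ 3`
  have hbound : log (t ^ 4) / (t ^ 4 - 1) ≤ 4 / t ^ 3 := by
    rw [div_le_div_iff₀ hpos (by positivity), log_pow]
    push_cast
    nlinarith [mul_le_mul_of_nonneg_left (log_le_sub_one_of_pos (by linarith : 0 < t))
      (by positivity : (0 : ℝ) ≤ t ^ 3), one_le_pow₀ ht (n := 3)]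
  calc logRatioSq (t ^ 4) ≤ (4 / t ^ 3) ^ 2 :=
        pow_le_pow_left₀ (div_nonneg (log_nonneg (one_le_pow₀ ht)) hpos.le) hbound 2
    _ = 16 * (t ^ 4) ^ (-3 / 2 : ℝ) := by
        rw [← rpow_natCast t 4, ← rpow_mul (by linarith),
          show (4 : ℕ) * (-3 / 2 : ℝ) = -(6 : ℕ) by norm_num, rpow_neg (by linarith),
          rpow_natCast]
        field_simp
        ring

lemma logRatioSq_le_of_le_one {r : ℝ} (h₀ : 0 < r) (h₁ : r ≤ 1) :
    logRatioSq r ≤ 16 * r ^ (-1 / 2 : ℝ) := by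
  have e := logRatioSq_inv r⁻¹
  rw [inv_inv] at e
  calc logRatioSq r = r⁻¹ ^ 2 * logRatioSq r⁻¹ := e
    _ ≤ r⁻¹ ^ 2 * (16 * r⁻¹ ^ (-3 / 2 : ℝ)) := by
        gcongr
        exact logRatioSq_le_of_one_le ((one_le_inv₀ h₀).mpr h₁)
    _ = 16 * r ^ (-1 / 2 : ℝ) := by
        rw [inv_rpow h₀.le, ← rpow_neg h₀.le, inv_pow, ← rpow_natCast, ← rpow_neg h₀.le,
          mul_left_comm, ← rpow_add h₀]
        norm_num

lemma integrableOn_logRatioSq : IntegrableOn logRatioSq (Ioi 0) := by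
  have h₀ : IntegrableOn logRatioSq (Ioc 0 1) := by
    refine (((intervalIntegrable_iff_integrableOn_Ioc_of_le zero_le_one).mp
      (intervalIntegral.intervalIntegrable_rpow' (r := -1 / 2) (by norm_num))).const_mul 16).mono'
      measurable_logRatioSq.aestronglyMeasurable
      (ae_restrict_of_forall_mem measurableSet_Ioc fun r hr => ?_)
    rw [Real.norm_of_nonneg (logRatioSq_nonneg r)]
    exact logRatioSq_le_of_le_one hr.1 hr.2
  have h₁ : IntegrableOn logRatioSq (Ioi 1) := by
    refine ((integrableOn_Ioi_rpow_of_lt (by norm_num : (-3 / 2 : ℝ) < -1) one_pos).const_mul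
      16).mono' measurable_logRatioSq.aestronglyMeasurable
      (ae_restrict_of_forall_mem measurableSet_Ioi fun r hr => ?_)
    rw [Real.norm_of_nonneg (logRatioSq_nonneg r)]
    exact logRatioSq_le_of_one_le hr.out.le
  simpa [Ioc_union_Ioi_eq_Ioi zero_le_one] using h₀.union h₁

lemma sq_log_sub_mul_inv_le {P Q u : ℝ} (hP : 0 < P) (hQ : 0 < Q) (hu : |P - Q| ≤ u) :
    (log P - log Q) ^ 2 * ((1 + u) ^ 2)⁻¹ ≤ logRatioSq (Q / P) * (P ^ 2)⁻¹ := by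
  rcases eq_or_ne P Q with rfl | hPQ
  · simp [logRatioSq]
  have e : logRatioSq (Q / P) * (P ^ 2)⁻¹ = (log P - log Q) ^ 2 * ((P - Q) ^ 2)⁻¹ := by
    rw [logRatioSq, log_div hQ.ne' hP.ne']
    field_simp
    ring
  have hsq : (P - Q) ^ 2 ≤ (1 + u) ^ 2 :=
    sq_le_sq' (by linarith [neg_abs_le (P - Q)]) (by linarith [le_abs_self (P - Q)])
  rw [e]
  exact mul_le_mul_of_nonneg_left (inv_anti₀ (by positivity) hsq) (sq_nonneg _)

noncomputable def energy (φ : ℝ → ℝ) : ℝ :=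
  ∫ x, ∫ y, |φ x - φ y| ^ 2 * ((1 + |x - y|) ^ 2)⁻¹

section Energy

variable {φ : ℝ → ℝ}

lemma integral_sq_sub_mul_kernel_le {A : ℝ}
    (hφ : ∀ x y, |φ x - φ y| ≤ A * |log (1 + |x|) - log (1 + |y|)|) (x : ℝ) :
    ∫ y, |φ x - φ y| ^ 2 * ((1 + |x - y|) ^ 2)⁻¹ ≤
      2 * A ^ 2 * (∫ r in Ioi 0, logRatioSq r) * (1 + |x|)⁻¹ := by
  set P := 1 + |x| with hPdef
  have hP : 0 < P := by positivity
  have hint : Integrable fun y => logRatioSq ((1 + |y|) / P) :=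
    integrable_comp_abs (integrableOn_comp_one_add_div integrableOn_logRatioSq hP)
  have hle : ∀ y, |φ x - φ y| ^ 2 * ((1 + |x - y|) ^ 2)⁻¹ ≤
      A ^ 2 * (P ^ 2)⁻¹ * logRatioSq ((1 + |y|) / P) := by
    intro y
    have hsq : |φ x - φ y| ^ 2 ≤ A ^ 2 * (log P - log (1 + |y|)) ^ 2 := by
      calc |φ x - φ y| ^ 2 ≤ (A * |log P - log (1 + |y|)|) ^ 2 :=
            pow_le_pow_left₀ (abs_nonneg _) (hφ x y) 2
        _ = A ^ 2 * (log P - log (1 + |y|)) ^ 2 := by rw [mul_pow, sq_abs]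
    have hdist : |P - (1 + |y|)| ≤ |x - y| := by
      simpa [hPdef] using abs_abs_sub_abs_le_abs_sub x y
    calc |φ x - φ y| ^ 2 * ((1 + |x - y|) ^ 2)⁻¹
        ≤ A ^ 2 * ((log P - log (1 + |y|)) ^ 2 * ((1 + |x - y|) ^ 2)⁻¹) := by
          rw [← mul_assoc]
          gcongr
      _ ≤ A ^ 2 * (logRatioSq ((1 + |y|) / P) * (P ^ 2)⁻¹) :=
          mul_le_mul_of_nonneg_left (sq_log_sub_mul_inv_le hP (by positivity) hdist)
            (sq_nonneg A)
      _ = A ^ 2 * (P ^ 2)⁻¹ * logRatioSq ((1 + |y|) / P) := by ring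
  calc ∫ y, |φ x - φ y| ^ 2 * ((1 + |x - y|) ^ 2)⁻¹
      ≤ ∫ y, A ^ 2 * (P ^ 2)⁻¹ * logRatioSq ((1 + |y|) / P) :=
        integral_mono_of_nonneg (.of_forall fun y => by positivity) (hint.const_mul _)
          (.of_forall hle)
    _ = A ^ 2 * (P ^ 2)⁻¹ * (2 * ∫ t in Ioi 0, logRatioSq ((1 + t) / P)) := by
        rw [integral_const_mul, integral_comp_abs (f := fun t => logRatioSq ((1 + t) / P))]
    _ ≤ A ^ 2 * (P ^ 2)⁻¹ * (2 * (P * ∫ r in Ioi 0, logRatioSq r)) := by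
        gcongr
        exact setIntegral_comp_one_add_div_le integrableOn_logRatioSq
          (fun r _ => logRatioSq_nonneg r) hP
    _ = 2 * A ^ 2 * (∫ r in Ioi 0, logRatioSq r) * P⁻¹ := by
        field_simp

lemma integral_sq_sub_mul_kernel_le_of_far {E : ℝ} (hE : 0 ≤ E) (hφ : ∀ x, |φ x| ≤ 1)
    (hsupp : ∀ x, E ≤ |x| → φ x = 0) {x : ℝ} (hx : 2 * E ≤ |x|) :
    ∫ y, |φ x - φ y| ^ 2 * ((1 + |x - y|) ^ 2)⁻¹ ≤ 8 * E * ((1 + |x|) ^ 2)⁻¹ := by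
  have hφx : φ x = 0 := hsupp x (by linarith)
  have hle : ∀ y, |φ x - φ y| ^ 2 * ((1 + |x - y|) ^ 2)⁻¹ ≤
      (Icc (-E) E).indicator (fun _ => 4 * ((1 + |x|) ^ 2)⁻¹) y := by
    intro y
    by_cases hy : |y| ≤ E
    · rw [indicator_of_mem (show y ∈ Icc (-E) E from abs_le.mp hy), hφx, zero_sub, abs_neg]
      have hker : ((1 + |x - y|) ^ 2)⁻¹ ≤ 4 * ((1 + |x|) ^ 2)⁻¹ := by
        rw [← div_eq_mul_inv, ← inv_div]
        exact inv_anti₀ (by positivity)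
          (by nlinarith [abs_sub_abs_le_abs_sub x y, abs_nonneg (x - y)])
      calc |φ y| ^ 2 * ((1 + |x - y|) ^ 2)⁻¹ ≤ 1 * (4 * ((1 + |x|) ^ 2)⁻¹) :=
            mul_le_mul (pow_le_one₀ (abs_nonneg _) (hφ y)) hker (by positivity) zero_le_one
        _ = 4 * ((1 + |x|) ^ 2)⁻¹ := one_mul _
    · have hy' : y ∉ Icc (-E) E := fun h => hy (abs_le.mpr h)
      simp [indicator_of_notMem hy', hφx, hsupp y (le_of_not_ge hy)]
  calc ∫ y, |φ x - φ y| ^ 2 * ((1 + |x - y|) ^ 2)⁻¹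
      ≤ ∫ y, (Icc (-E) E).indicator (fun _ => 4 * ((1 + |x|) ^ 2)⁻¹) y :=
        integral_mono_of_nonneg (.of_forall fun y => by positivity)
          ((integrable_indicator_iff measurableSet_Icc).mpr
            (integrableOn_const measure_Icc_lt_top.ne))
          (.of_forall hle)
    _ = 8 * E * ((1 + |x|) ^ 2)⁻¹ := by
        rw [integral_indicator_const _ measurableSet_Icc, Real.volume_real_Icc_of_le (by linarith),
          smul_eq_mul]
        ring

theorem energy_le_of_logLipschitz {A E X : ℝ} (hE : 0 ≤ E) (hX : 2 * E ≤ X)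
    (hφ : ∀ x, |φ x| ≤ 1) (hsupp : ∀ x, E ≤ |x| → φ x = 0)
    (hlip : ∀ x y, |φ x - φ y| ≤ A * |log (1 + |x|) - log (1 + |y|)|) :
    energy φ ≤
      2 * (2 * A ^ 2 * (∫ r in Ioi 0, logRatioSq r) * log (1 + X) + 8 * E * (1 + X)⁻¹) := by
  have hX₀ : 0 ≤ X := by linarith
  have hbound : ∀ x, ∫ y, |φ x - φ y| ^ 2 * ((1 + |x - y|) ^ 2)⁻¹ ≤
      radialMajorant (2 * A ^ 2 * ∫ r in Ioi 0, logRatioSq r) (8 * E) X |x| := by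
    intro x
    unfold radialMajorant
    split_ifs with hx
    · exact integral_sq_sub_mul_kernel_le hlip x
    · exact integral_sq_sub_mul_kernel_le_of_far hE hφ hsupp (by linarith [not_le.mp hx])
  calc energy φ
      ≤ ∫ x, radialMajorant (2 * A ^ 2 * ∫ r in Ioi 0, logRatioSq r) (8 * E) X |x| :=
        integral_mono_of_nonneg (.of_forall fun x => integral_nonneg fun y => by positivity)
          (integrable_comp_abs (integrableOn_radialMajorant hX₀)) (.of_forall hbound)
    _ = _ := by
        rw [integral_comp_abs (f := radialMajorant _ _ X), setIntegral_radialMajorant hX₀]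

end Energy

lemma exists_lipschitzWith_smoothTransition : ∃ K, LipschitzWith K smoothTransition := by
  obtain ⟨K, hK⟩ := (smoothTransition.contDiff (n := 1)).contDiffOn.exists_lipschitzOnWith
    one_ne_zero (convex_Icc (0 : ℝ) 1) isCompact_Icc
  refine ⟨K * 1, ?_⟩
  convert hK.to_restrict.comp (LipschitzWith.projIcc zero_le_one) using 1
  ext x
  simp

lemma log_one_add_sq_sub_le {a b : ℝ} (ha : 0 ≤ a) (hab : a ≤ b) :
    log (1 + b ^ 2) - log (1 + a ^ 2) ≤ 4 * (log (1 + b) - log (1 + a)) := by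
  have hb : 0 ≤ b := ha.trans hab
  have key : (1 + b ^ 2) * (1 + a) ^ 4 ≤ (1 + a ^ 2) * (1 + b) ^ 4 := by
    nlinarith [mul_nonneg (sub_nonneg.2 hab) (by positivity : (0 : ℝ) ≤
      4 + 5 * (a + b) + 4 * a ^ 2 + 4 * b ^ 2 + (a + b) * (a ^ 2 + b ^ 2) + 4 * a ^ 2 * b ^ 2 +
        a ^ 2 * b ^ 2 * (a + b))]
  have := log_le_log (by positivity) key
  rw [log_mul (by positivity) (by positivity), log_mul (by positivity) (by positivity),
    log_pow, log_pow] at this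
  push_cast at this
  linarith

lemma abs_log_one_add_sq_sub_le (x y : ℝ) :
    |log (1 + x ^ 2) - log (1 + y ^ 2)| ≤ 4 * |log (1 + |x|) - log (1 + |y|)| := by
  wlog h : |x| ≤ |y| generalizing x y
  · rw [abs_sub_comm (log (1 + x ^ 2)), abs_sub_comm (log (1 + |x|))]
    exact this y x (le_of_not_ge h)
  have h₁ : log (1 + |x| ^ 2) ≤ log (1 + |y| ^ 2) := log_le_log (by positivity) (by gcongr)
  have h₂ : log (1 + |x|) ≤ log (1 + |y|) := log_le_log (by positivity) (by linarith)
  rw [← sq_abs x, ← sq_abs y, abs_of_nonpos (sub_nonpos.2 h₁),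
    abs_of_nonpos (sub_nonpos.2 h₂)]
  linarith [log_one_add_sq_sub_le (abs_nonneg x) h]

noncomputable def plateau (S x : ℝ) : ℝ := smoothTransition (2 - log (1 + x ^ 2) / S)

section Plateau

variable {S : ℝ}

lemma contDiff_plateau {n : ℕ∞} : ContDiff ℝ n (plateau S) :=
  smoothTransition.contDiff.comp <| contDiff_const.sub <|
    (ContDiff.log (by fun_prop) fun x => by positivity).div_const S

lemma plateau_nonneg (x : ℝ) : 0 ≤ plateau S x := smoothTransition.nonneg _

lemma plateau_le_one (x : ℝ) : plateau S x ≤ 1 := smoothTransition.le_one _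

lemma plateau_eq_one (hS : 1 ≤ S) {x : ℝ} (hx : |x| ≤ 1) : plateau S x = 1 := by
  refine smoothTransition.one_of_one_le ?_
  have : log (1 + x ^ 2) ≤ S := by
    have := log_le_sub_one_of_pos (by positivity : 0 < 1 + x ^ 2)
    nlinarith [sq_abs x, abs_nonneg x]
  have : log (1 + x ^ 2) / S ≤ 1 := (div_le_one (by linarith)).2 this
  linarith

lemma plateau_eq_zero (hS : 0 < S) {x : ℝ} (hx : exp S ≤ |x|) : plateau S x = 0 := by
  refine smoothTransition.zero_of_nonpos ?_
  have hsq : exp (2 * S) ≤ 1 + x ^ 2 := by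
    rw [two_mul, exp_add, ← sq_abs x]
    nlinarith [exp_pos S]
  have : 2 * S ≤ log (1 + x ^ 2) := by rwa [le_log_iff_exp_le (by positivity)]
  have : 2 ≤ log (1 + x ^ 2) / S := by rwa [le_div_iff₀ hS]
  linarith

lemma hasCompactSupport_plateau (hS : 0 < S) : HasCompactSupport (plateau S) :=
  HasCompactSupport.intro (isCompact_Icc (a := -exp S) (b := exp S)) fun _ hx =>
    plateau_eq_zero hS (le_of_lt (not_le.mp fun h => hx (abs_le.mp h)))

lemma abs_plateau_sub_le (hS : 0 < S) {K : NNReal} (hK : LipschitzWith K smoothTransition)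
    (x y : ℝ) :
    |plateau S x - plateau S y| ≤ 4 * K / S * |log (1 + |x|) - log (1 + |y|)| := by
  calc |plateau S x - plateau S y|
      ≤ K * |(2 - log (1 + x ^ 2) / S) - (2 - log (1 + y ^ 2) / S)| := by
        rw [← Real.dist_eq, ← Real.dist_eq]
        exact hK.dist_le_mul _ _
    _ = K / S * |log (1 + x ^ 2) - log (1 + y ^ 2)| := by
        rw [sub_sub_sub_cancel_left, ← sub_div, abs_div, abs_of_pos hS, abs_sub_comm]
        ring
    _ ≤ K / S * (4 * |log (1 + |x|) - log (1 + |y|)|) := by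
        gcongr
        exact abs_log_one_add_sq_sub_le x y
    _ = 4 * K / S * |log (1 + |x|) - log (1 + |y|)| := by ring

end Plateau

lemma exists_energy_plateau_le : ∃ B, ∀ S, 1 ≤ S → energy (plateau S) ≤ B / S := by
  obtain ⟨K, hK⟩ := exists_lipschitzWith_smoothTransition
  set I := ∫ r in Ioi 0, logRatioSq r
  have hI : 0 ≤ I := setIntegral_nonneg measurableSet_Ioi fun r _ => logRatioSq_nonneg r
  refine ⟨192 * K ^ 2 * I + 16, fun S hS => ?_⟩
  have hS₀ : 0 < S := by linarith
  set E := exp S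
  have hE : S + 1 ≤ E := add_one_le_exp S
  have hlog : log (1 + E ^ 2) ≤ 3 * S := by
    rw [log_le_iff_le_exp (by positivity), show 3 * S = (3 : ℕ) * S by norm_num, exp_nat_mul]
    nlinarith
  have htail : 8 * E * (1 + E ^ 2)⁻¹ ≤ 8 / S := by
    rw [← div_eq_mul_inv, div_le_div_iff₀ (by positivity) hS₀]
    nlinarith
  calc energy (plateau S)
      ≤ 2 * (2 * (4 * K / S) ^ 2 * I * log (1 + E ^ 2) + 8 * E * (1 + E ^ 2)⁻¹) :=
        energy_le_of_logLipschitz (exp_pos S).le (by nlinarith)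
          (fun x => by rw [abs_of_nonneg (plateau_nonneg x)]; exact plateau_le_one x)
          (fun x hx => plateau_eq_zero hS₀ hx) (abs_plateau_sub_le hS₀ hK)
    _ ≤ 2 * (2 * (4 * K / S) ^ 2 * I * (3 * S) + 8 / S) := by gcongr
    _ = (192 * K ^ 2 * I + 16) / S := by
        field_simp
        ring

end LogPlateau

open LogPlateau

/-- One-dimensional plateau construction: for `C > 0`, `δ > 0` there is a `C¹`
compactly supported `φ : ℝ → ℝ` with `0 ≤ φ ≤ 1`, `φ = 1` on `[-1, 1]`, and
`∫∫ |φ(x) - φ(y)|² C(1+|x-y|)^{-2} dx dy < δ`. -/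
theorem stmt_14 (C δ : ℝ) (hC : 0 < C) (hδ : 0 < δ) :
    ∃ φ : ℝ → ℝ,
      ContDiff ℝ 1 φ ∧ HasCompactSupport φ ∧
      (∀ x, 0 ≤ φ x ∧ φ x ≤ 1) ∧
      (∀ x : ℝ, |x| ≤ 1 → φ x = 1) ∧
      (∫ x : ℝ, ∫ y : ℝ, |φ x - φ y| ^ 2 * (C * ((1 + |x - y|) ^ 2)⁻¹)) < δ := by
  obtain ⟨B, hB⟩ := exists_energy_plateau_le
  set S := max 1 (C * B / δ + 1)
  have hS₁ : 1 ≤ S := le_max_left _ _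
  have hS : C * B / δ < S := (lt_add_one _).trans_le (le_max_right _ _)
  refine ⟨plateau S, contDiff_plateau, hasCompactSupport_plateau (by linarith),
    fun x => ⟨plateau_nonneg x, plateau_le_one x⟩, fun x hx => plateau_eq_one hS₁ hx, ?_⟩
  calc (∫ x, ∫ y, |plateau S x - plateau S y| ^ 2 * (C * ((1 + |x - y|) ^ 2)⁻¹))
      = C * energy (plateau S) := by
        simp only [energy, mul_left_comm _ C, integral_const_mul]
    _ ≤ C * (B / S) := by gcongr; exact hB S hS₁
    _ < δ := by
        rw [div_lt_iff₀ hδ] at hS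
        rw [← mul_div_assoc, div_lt_iff₀ (by linarith)]
        linarith
end
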